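/- arXiv:1806.04940 — 6 statements merged into one kernel-verified Lean document; each statement's English description precedes it below -/
import Mathlib

section
/- (Type P₁) For α, β, γ ∈ ℂ with αβγ ≠ 0, let A(α,β,γ) = ℂ⟨x,y,z⟩/(αxy − βyx, βyz − γzy, γzx − αxz). For α', β', γ' ∈ ℂ with α'β'γ' ≠ 0, the algebras A(α,β,γ) and A(α',β',γ') are isomorphic as graded algebras if and only if there exists a nonzero scalar λ ∈ ℂ such that (α',β',γ') = λ·(σ(α,β,γ)) for some permutation σ of the triple, i.e. (α':β':γ') equals one of (α:β:γ), (α:γ:β), (β:α:γ), (β:γ:α), (γ:α:β), (γ:β:α) as points of ℙ². -/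
noncomputable section

/-- The free algebra `ℂ⟨x,y,z⟩`. -/
abbrev F3 : Type := FreeAlgebra ℂ (Fin 3)

def X : F3 := FreeAlgebra.ι ℂ 0
def Y : F3 := FreeAlgebra.ι ℂ 1
def Z : F3 := FreeAlgebra.ι ℂ 2

/-- The relation identifying the three relators with `0`. -/
def rel3 (f₁ f₂ f₃ : F3) : F3 → F3 → Prop :=
  fun a b => (a = f₁ ∨ a = f₂ ∨ a = f₃) ∧ b = 0

/-- `ℂ⟨x,y,z⟩/(f₁,f₂,f₃)`, the quotient by the two-sided ideal generated by `f₁,f₂,f₃`. -/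
abbrev QuadAlg (f₁ f₂ f₃ : F3) : Type := RingQuot (rel3 f₁ f₂ f₃)

/-- The linear span of the images of `x, y, z` in the quotient. -/
def genSpan (f₁ f₂ f₃ : F3) : Submodule ℂ (QuadAlg f₁ f₂ f₃) :=
  Submodule.span ℂ {RingQuot.mkAlgHom ℂ (rel3 f₁ f₂ f₃) X,
                    RingQuot.mkAlgHom ℂ (rel3 f₁ f₂ f₃) Y,
                    RingQuot.mkAlgHom ℂ (rel3 f₁ f₂ f₃) Z}

/-- Isomorphism of graded algebras: a `ℂ`-algebra isomorphism carrying the span of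
the images of `x,y,z` onto the span of the images of `x,y,z`. -/
def GrIso (f₁ f₂ f₃ g₁ g₂ g₃ : F3) : Prop :=
  ∃ e : QuadAlg f₁ f₂ f₃ ≃ₐ[ℂ] QuadAlg g₁ g₂ g₃,
    Submodule.map e.toLinearMap (genSpan f₁ f₂ f₃) = genSpan g₁ g₂ g₃

/-!
Write `w = (α, β, γ)`; the relations then read `w i • x i x j = w j • x j x i` for all `i, j`.
Letting `x i` act on `ℂ[X₀, X₁, X₂]` by `f ↦ X i * f(w₀X₀, w₁X₁, w₂X₂)` respects them, so
`x₀, x₁, x₂` are linearly independent and `∑ K k l • x k x l = 0` forces `K * diagonal w` to be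
skew-symmetric. A graded isomorphism acts on the generators by an invertible matrix `M`, hence on
quadratic elements by `K ↦ M K Mᵀ`; since the relations are the `diagonal w * S` with `S` skew,
this gives `diagonal w' * M = μ • (M * diagonal w)`. Along a permutation `σ` with
`M (σ i) i ≠ 0` for all `i` this reads `w' (σ i) = μ * w i`. Conversely, relabelling the
generators along such a `σ` is a graded isomorphism.
-/

open Matrix

section QuadElem

variable {R B n : Type*} [CommSemiring R] [Semiring B] [Algebra R B] [Fintype n]

def quadElem (g : n → B) (K : Matrix n n R) : B := ∑ k, ∑ l, K k l • (g k * g l)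

lemma map_quadElem {C : Type*} [Semiring C] [Algebra R C] (f : B →ₐ[R] C) (g : n → B)
    (K : Matrix n n R) : f (quadElem g K) = quadElem (f ∘ g) K := by
  simp [quadElem, map_sum, map_smul, map_mul]

lemma quadElem_congr (g : n → B) (M K : Matrix n n R) :
    quadElem (fun i => ∑ k, M k i • g k) K = quadElem g (M * K * Mᵀ) := calc
  _ = ∑ i, ∑ j, ∑ k, ∑ l, (M k i * K i j * M l j) • (g k * g l) := by
    simp only [quadElem, Finset.sum_mul_sum, Finset.smul_sum, smul_mul_smul_comm, smul_smul]
    congr! 5 with i _ j _ k _ l _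
    ring
  _ = ∑ k, ∑ l, ∑ i, ∑ j, (M k i * K i j * M l j) • (g k * g l) := by
    rw [Finset.sum_congr rfl fun i _ => Finset.sum_comm, Finset.sum_comm]
    exact Finset.sum_congr rfl fun k _ => Finset.sum_comm_cycle
  _ = quadElem g (M * K * Mᵀ) := by
    simp only [quadElem, mul_apply, transpose_apply, Finset.sum_mul, Finset.sum_smul]
    exact Finset.sum_congr rfl fun k _ => Finset.sum_congr rfl fun l _ => Finset.sum_comm

lemma quadElem_diagonal_mul_skew {R B : Type*} [CommRing R] [Ring B] [Algebra R B] [DecidableEq n]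
    (g : n → B) (w : n → R) (a b : n) :
    quadElem g (diagonal w * (single a b 1 - single b a 1))
      = w a • (g a * g b) - w b • (g b * g a) := by
  simp [quadElem, diagonal_mul, single_apply, mul_sub, sub_smul, Finset.sum_sub_distrib, ite_and]

end QuadElem

section SkewRep

variable {σ R : Type*} [CommRing R] (w : σ → R)

/-- With `w = ![α, β, γ]` the relators of `typeP1_iso_iff` are `relator w 0 1`, `relator w 1 2`
and `relator w 2 0`. -/
def relator (i j : σ) : FreeAlgebra R σ :=
  w i • (FreeAlgebra.ι R i * FreeAlgebra.ι R j) - w j • (FreeAlgebra.ι R j * FreeAlgebra.ι R i)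

lemma relator_swap (i j : σ) : relator w j i = -relator w i j := by
  simp [relator]

def rescale : MvPolynomial σ R →ₐ[R] MvPolynomial σ R :=
  MvPolynomial.aeval fun k => w k • MvPolynomial.X k

def skewRep : FreeAlgebra R σ →ₐ[R] Module.End R (MvPolynomial σ R) :=
  FreeAlgebra.lift R fun i => LinearMap.mulLeft R (MvPolynomial.X i) ∘ₗ (rescale w).toLinearMap

lemma skewRep_ι_apply (i : σ) (f : MvPolynomial σ R) :
    skewRep w (FreeAlgebra.ι R i) f = MvPolynomial.X i * rescale w f := by
  simp [skewRep]

lemma skewRep_ι_mul_ι_apply (i j : σ) (f : MvPolynomial σ R) :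
    skewRep w (FreeAlgebra.ι R i * FreeAlgebra.ι R j) f
      = w j • (MvPolynomial.X i * MvPolynomial.X j * rescale w (rescale w f)) := by
  rw [map_mul, Module.End.mul_apply, skewRep_ι_apply, skewRep_ι_apply, map_mul]
  simp [rescale, mul_assoc]

lemma skewRep_relator (i j : σ) : skewRep w (relator w i j) = 0 := by
  refine LinearMap.ext fun f => ?_
  simp only [relator, map_sub, map_smul, LinearMap.sub_apply, LinearMap.smul_apply,
    skewRep_ι_mul_ι_apply, smul_smul, LinearMap.zero_apply]
  rw [mul_comm (w j), mul_comm (MvPolynomial.X j : MvPolynomial σ R), sub_self]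

lemma skewRep_ι_one (i : σ) : skewRep w (FreeAlgebra.ι R i) 1 = MvPolynomial.X i := by
  rw [skewRep_ι_apply, map_one, mul_one]

lemma skewRep_quadElem_one [Fintype σ] [DecidableEq σ] (C : Matrix σ σ R) :
    skewRep w (quadElem (FreeAlgebra.ι R) C) 1 = quadElem MvPolynomial.X (C * diagonal w) := by
  simp only [quadElem, map_sum, map_smul, LinearMap.coe_sum, Finset.sum_apply,
    LinearMap.smul_apply, skewRep_ι_mul_ι_apply, map_one, mul_one, smul_smul, mul_diagonal]

end SkewRep

lemma MvPolynomial.transpose_eq_neg_of_quadElem_X_eq_zero {σ R : Type*} [Fintype σ]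
    [DecidableEq σ] [CommRing R] {C : Matrix σ σ R}
    (h : quadElem (MvPolynomial.X : σ → MvPolynomial σ R) C = 0) : Cᵀ = -C := by
  have halt : (toLinearMap₂' R C).IsAlt := fun v => by
    have hv := congrArg (MvPolynomial.eval v) h
    simp only [quadElem, map_sum, MvPolynomial.smul_eval, map_mul, MvPolynomial.eval_X,
      map_zero] at hv
    rw [toLinearMap₂'_apply, ← hv]
    simp only [smul_eq_mul, mul_comm, mul_left_comm]
  ext a b
  have hab := halt.neg (Pi.single a 1) (Pi.single b 1)
  simp [toLinearMap₂'_apply, Pi.single_apply] at hab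
  simp [← hab]

section SkewCommute

variable {n K : Type*} [Fintype n] [DecidableEq n] [Field K] [NeZero (2 : K)]

lemma Matrix.exists_eq_smul_one_of_mul_skew_eq {G : Matrix n n K}
    (h : ∀ a b, G * (single a b 1 - single b a 1) = (single a b 1 - single b a 1) * Gᵀ) :
    ∃ μ : K, G = μ • 1 := by
  rcases isEmpty_or_nonempty n with _ | ⟨⟨a₀⟩⟩
  · exact ⟨0, Subsingleton.elim _ _⟩
  have hoff : ∀ a b, a ≠ b → G b a = 0 := fun a b hab => by
    have hbb := congrFun₂ (h a b) b b
    simp [mul_sub, sub_mul, mul_single_apply_of_ne, single_mul_apply_of_ne, hab.symm] at hbb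
    have h2 : (2 : K) * G b a = 0 := by linear_combination hbb
    exact (mul_eq_zero.mp h2).resolve_left two_ne_zero
  have hdiag : ∀ a b, a ≠ b → G a a = G b b := fun a b hab => by
    simpa [mul_sub, sub_mul, mul_single_apply_of_ne, single_mul_apply_of_ne, hab, hab.symm]
      using congrFun₂ (h a b) a b
  refine ⟨G a₀ a₀, ext fun i j => ?_⟩
  rcases eq_or_ne i j with rfl | hij
  · rcases eq_or_ne i a₀ with rfl | hi
    · simp
    · simpa using hdiag i a₀ hi
  · simpa [one_apply_ne hij] using hoff j i hij.symm

lemma Matrix.exists_eq_smul_of_mul_skew_mul_transpose {A C : Matrix n n K} (hA : IsUnit A)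
    (h : ∀ a b, A * (single a b 1 - single b a 1) * Cᵀ = C * (single a b 1 - single b a 1) * Aᵀ) :
    ∃ μ : K, C = μ • A := by
  -- with `G = A⁻¹ * C`, the hypothesis is `A * (S * Gᵀ) * Aᵀ = A * (G * S) * Aᵀ`
  have hC : C = A * (A⁻¹ * C) :=
    (mul_nonsing_inv_cancel_left A C ((isUnit_iff_isUnit_det A).mp hA)).symm
  obtain ⟨μ, hμ⟩ := exists_eq_smul_one_of_mul_skew_eq (G := A⁻¹ * C) fun a b => by
    have hab := h a b
    rw [hC, transpose_mul, Matrix.mul_assoc, Matrix.mul_assoc, Matrix.mul_assoc] at hab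
    exact (hA.mul_left_cancel (((isUnit_transpose A).mpr hA).mul_right_cancel
      (by simpa only [Matrix.mul_assoc] using hab))).symm
  exact ⟨μ, by rw [hC, hμ, Matrix.mul_smul, Matrix.mul_one]⟩

end SkewCommute

lemma Matrix.exists_perm_forall_ne_zero_of_det_ne_zero {n R : Type*} [Fintype n] [DecidableEq n]
    [CommRing R] {M : Matrix n n R} (h : M.det ≠ 0) : ∃ σ : Equiv.Perm n, ∀ i, M (σ i) i ≠ 0 := by
  by_contra! hσ
  refine h ?_
  rw [det_apply]
  refine Finset.sum_eq_zero fun σ _ => ?_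
  obtain ⟨i, hi⟩ := hσ σ
  rw [Finset.prod_eq_zero (f := fun j => M (σ j) j) (Finset.mem_univ i) hi, smul_zero]

lemma Matrix.exists_perm_of_diagonal_mul_eq_smul_mul_diagonal {n K : Type*} [Fintype n]
    [DecidableEq n] [Nonempty n] [Field K] {M : Matrix n n K} {w w' : n → K} {μ : K}
    (hM : M.det ≠ 0) (hw' : ∀ i, w' i ≠ 0) (h : diagonal w' * M = μ • (M * diagonal w)) :
    ∃ l ≠ 0, ∃ σ : Equiv.Perm n, ∀ i, w' (σ i) = l * w i := by
  obtain ⟨σ, hσ⟩ := exists_perm_forall_ne_zero_of_det_ne_zero hM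
  have hscale : ∀ i, w' (σ i) = μ * w i := fun i => by
    have hi := congrFun₂ h (σ i) i
    simp only [diagonal_mul, smul_apply, mul_diagonal, smul_eq_mul] at hi
    exact mul_right_cancel₀ (hσ i) (by linear_combination hi)
  obtain ⟨i₀⟩ := ‹Nonempty n›
  exact ⟨μ, left_ne_zero_of_mul (hscale i₀ ▸ hw' (σ i₀)), σ, hscale⟩

abbrev SkewAlg (w : Fin 3 → ℂ) : Type := QuadAlg (relator w 0 1) (relator w 1 2) (relator w 2 0)

namespace SkewAlg

variable (w : Fin 3 → ℂ)

def mk : F3 →ₐ[ℂ] SkewAlg w := RingQuot.mkAlgHom ℂ _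

def gen (i : Fin 3) : SkewAlg w := mk w (FreeAlgebra.ι ℂ i)

lemma mk_relator (i j : Fin 3) : mk w (relator w i j) = 0 := by
  have hrel : ∀ f, rel3 (relator w 0 1) (relator w 1 2) (relator w 2 0) f 0 → mk w f = 0 :=
    fun f hf => (RingQuot.mkAlgHom_rel ℂ hf).trans (map_zero _)
  have h01 := hrel _ ⟨Or.inl rfl, rfl⟩
  have h12 := hrel _ ⟨Or.inr (Or.inl rfl), rfl⟩
  have h20 := hrel _ ⟨Or.inr (Or.inr rfl), rfl⟩
  have hswap : ∀ i j, mk w (relator w i j) = 0 → mk w (relator w j i) = 0 := fun i j h => by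
    rw [relator_swap w i j, map_neg, h, neg_zero]
  fin_cases i <;> fin_cases j <;> first | assumption | exact hswap _ _ ‹_› | simp [relator]

lemma mk_relator_eq (i j : Fin 3) :
    mk w (relator w i j) = w i • (gen w i * gen w j) - w j • (gen w j * gen w i) := by
  simp [relator, gen]

lemma quadElem_gen_diagonal_mul_skew (a b : Fin 3) :
    quadElem (gen w) (diagonal w * (single a b 1 - single b a 1)) = 0 := by
  rw [quadElem_diagonal_mul_skew, ← mk_relator_eq, mk_relator]

lemma genSpan_eq :
    genSpan (relator w 0 1) (relator w 1 2) (relator w 2 0)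
      = Submodule.span ℂ (Set.range (gen w)) := by
  rw [show Set.range (gen w) = {gen w 0, gen w 1, gen w 2} by
    ext; simp [Fin.exists_fin_succ, eq_comm]]
  rfl

variable {w} in
lemma algHom_ext {B : Type*} [Semiring B] [Algebra ℂ B] {f g : SkewAlg w →ₐ[ℂ] B}
    (h : ∀ i, f (gen w i) = g (gen w i)) : f = g :=
  RingQuot.ringQuot_ext' _ _ _ (FreeAlgebra.hom_ext (funext h))

def rep : SkewAlg w →ₐ[ℂ] Module.End ℂ (MvPolynomial (Fin 3) ℂ) :=
  RingQuot.liftAlgHom ℂ ⟨skewRep w, by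
    rintro _ _ ⟨(rfl | rfl | rfl), rfl⟩ <;> simp [skewRep_relator]⟩

lemma rep_mk (f : F3) : rep w (mk w f) = skewRep w f :=
  RingQuot.liftAlgHom_mkAlgHom_apply _ _ _ _

def actOnOne : SkewAlg w →ₗ[ℂ] MvPolynomial (Fin 3) ℂ :=
  LinearMap.applyₗ 1 ∘ₗ (rep w).toLinearMap

lemma actOnOne_mk (f : F3) : actOnOne w (mk w f) = skewRep w f 1 := by
  rw [← rep_mk]
  rfl

lemma linearIndependent_gen : LinearIndependent ℂ (gen w) := by
  refine LinearIndependent.of_comp (actOnOne w) ?_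
  have h : actOnOne w ∘ gen w = MvPolynomial.X := funext fun i => by
    simp [gen, actOnOne_mk, skewRep_ι_one]
  rw [h]
  exact MvPolynomial.linearIndependent_X _ _

lemma transpose_eq_neg_of_quadElem_gen_eq_zero {C : Matrix (Fin 3) (Fin 3) ℂ}
    (h : quadElem (gen w) C = 0) : (C * diagonal w)ᵀ = -(C * diagonal w) := by
  refine MvPolynomial.transpose_eq_neg_of_quadElem_X_eq_zero ?_
  have h1 := congrArg (actOnOne w) h
  rwa [show gen w = mk w ∘ FreeAlgebra.ι ℂ from rfl, ← map_quadElem, actOnOne_mk,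
    skewRep_quadElem_one, map_zero] at h1

lemma gen_mul_comm (i j : Fin 3) : w i • (gen w i * gen w j) = w j • (gen w j * gen w i) :=
  sub_eq_zero.mp ((mk_relator_eq w i j).symm.trans (mk_relator w i j))

variable {w} {w' : Fin 3 → ℂ}

lemma lift_relator (π : Fin 3 → Fin 3) {l : ℂ} (hl : l ≠ 0) (h : ∀ i, w' (π i) = l * w i)
    (i j : Fin 3) : FreeAlgebra.lift ℂ (gen w' ∘ π) (relator w i j) = 0 := by
  have hc := gen_mul_comm w' (π i) (π j)
  rw [h, h, mul_smul, mul_smul] at hc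
  simpa [relator, sub_eq_zero] using smul_right_injective _ hl hc

def relabel (π : Fin 3 → Fin 3) {l : ℂ} (hl : l ≠ 0) (h : ∀ i, w' (π i) = l * w i) :
    SkewAlg w →ₐ[ℂ] SkewAlg w' :=
  RingQuot.liftAlgHom ℂ ⟨FreeAlgebra.lift ℂ (gen w' ∘ π), by
    rintro _ _ ⟨(rfl | rfl | rfl), rfl⟩ <;> rw [map_zero, lift_relator π hl h]⟩

lemma relabel_gen (π : Fin 3 → Fin 3) {l : ℂ} (hl : l ≠ 0) (h : ∀ i, w' (π i) = l * w i)
    (i : Fin 3) : relabel π hl h (gen w i) = gen w' (π i) := by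
  simp [relabel, gen, mk]

def relabelEquiv (σ : Equiv.Perm (Fin 3)) {l : ℂ} (hl : l ≠ 0) (h : ∀ i, w' (σ i) = l * w i) :
    SkewAlg w ≃ₐ[ℂ] SkewAlg w' :=
  have h' : ∀ j, w (σ.symm j) = l⁻¹ * w' j := fun j => by
    rw [← σ.apply_symm_apply j, h, σ.symm_apply_apply, inv_mul_cancel_left₀ hl]
  AlgEquiv.ofAlgHom (relabel σ hl h) (relabel σ.symm (inv_ne_zero hl) h')
    (algHom_ext fun i => by simp [relabel_gen]) (algHom_ext fun i => by simp [relabel_gen])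

theorem grIso_of_perm (σ : Equiv.Perm (Fin 3)) {l : ℂ} (hl : l ≠ 0) (h : ∀ i, w' (σ i) = l * w i) :
    GrIso (relator w 0 1) (relator w 1 2) (relator w 2 0)
      (relator w' 0 1) (relator w' 1 2) (relator w' 2 0) := by
  refine ⟨relabelEquiv σ hl h, ?_⟩
  rw [genSpan_eq, genSpan_eq, Submodule.map_span, ← Set.range_comp]
  congr 1
  convert σ.surjective.range_comp (gen w') using 2
  ext i
  exact relabel_gen σ hl h i

lemma det_ne_zero_of_map_gen (e : SkewAlg w →ₐ[ℂ] SkewAlg w') (he : Function.Injective e)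
    {M : Matrix (Fin 3) (Fin 3) ℂ} (hM : ∀ i, e (gen w i) = ∑ k, M k i • gen w' k) :
    M.det ≠ 0 := by
  intro hdet
  obtain ⟨v, hv, hMv⟩ := exists_mulVec_eq_zero_iff.mpr hdet
  have himage : e (∑ i, v i • gen w i) = ∑ k, (M *ᵥ v) k • gen w' k := by
    simp only [map_sum, map_smul, hM, Finset.smul_sum, smul_smul, mulVec, dotProduct,
      Finset.sum_smul]
    rw [Finset.sum_comm]
    simp only [mul_comm]
  rw [hMv] at himage
  simp only [Pi.zero_apply, zero_smul, Finset.sum_const_zero] at himage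
  exact hv (funext (Fintype.linearIndependent_iff.mp (linearIndependent_gen w) v
    (he (himage.trans (map_zero e).symm))))

lemma mul_skew_mul_transpose_comm_of_map_gen (e : SkewAlg w →ₐ[ℂ] SkewAlg w')
    {M : Matrix (Fin 3) (Fin 3) ℂ} (hM : ∀ i, e (gen w i) = ∑ k, M k i • gen w' k) (a b : Fin 3) :
    M * diagonal w * (single a b 1 - single b a 1) * (diagonal w' * M)ᵀ
      = diagonal w' * M * (single a b 1 - single b a 1) * (M * diagonal w)ᵀ := by
  have hrel := congrArg e (quadElem_gen_diagonal_mul_skew w a b)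
  rw [map_quadElem, map_zero, show e ∘ gen w = fun i => ∑ k, M k i • gen w' k from funext hM,
    quadElem_congr] at hrel
  have hskew := transpose_eq_neg_of_quadElem_gen_eq_zero w' hrel
  have hS : (single a b (1 : ℂ) - single b a 1)ᵀ = -(single a b 1 - single b a 1) := by
    simp [transpose_sub]
  simp only [transpose_mul, diagonal_transpose, hS, Matrix.mul_neg, Matrix.neg_mul, neg_inj,
    Matrix.mul_assoc] at hskew ⊢
  exact hskew.symm

theorem exists_perm_of_grIso (hw : ∀ i, w i ≠ 0) (hw' : ∀ i, w' i ≠ 0)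
    (h : GrIso (relator w 0 1) (relator w 1 2) (relator w 2 0)
      (relator w' 0 1) (relator w' 1 2) (relator w' 2 0)) :
    ∃ l ≠ 0, ∃ σ : Equiv.Perm (Fin 3), ∀ i, w' (σ i) = l * w i := by
  obtain ⟨e, he⟩ := h
  have hmem : ∀ i, e (gen w i) ∈ Submodule.span ℂ (Set.range (gen w')) := fun i => by
    rw [← genSpan_eq, ← he, genSpan_eq]
    exact Submodule.mem_map_of_mem (Submodule.subset_span ⟨i, rfl⟩)
  choose c hc using fun i => (Submodule.mem_span_range_iff_exists_fun ℂ).mp (hmem i)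
  set M : Matrix (Fin 3) (Fin 3) ℂ := of fun k i => c i k
  have hM : ∀ i, e (gen w i) = ∑ k, M k i • gen w' k := fun i => (hc i).symm
  have hdet := det_ne_zero_of_map_gen e.toAlgHom e.injective hM
  have hunit : IsUnit (M * diagonal w) := by
    rw [isUnit_iff_isUnit_det, det_mul, det_diagonal]
    exact (mul_ne_zero hdet (Finset.prod_ne_zero_iff.mpr fun i _ => hw i)).isUnit
  obtain ⟨μ, hμ⟩ := exists_eq_smul_of_mul_skew_mul_transpose (C := diagonal w' * M) hunit
    (mul_skew_mul_transpose_comm_of_map_gen e.toAlgHom hM)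
  exact exists_perm_of_diagonal_mul_eq_smul_mul_diagonal hdet hw' hμ

theorem grIso_iff_exists_perm (hw : ∀ i, w i ≠ 0) (hw' : ∀ i, w' i ≠ 0) :
    GrIso (relator w 0 1) (relator w 1 2) (relator w 2 0)
        (relator w' 0 1) (relator w' 1 2) (relator w' 2 0) ↔
      ∃ l ≠ 0, ∃ σ : Equiv.Perm (Fin 3), ∀ i, w' (σ i) = l * w i :=
  ⟨exists_perm_of_grIso hw hw', fun ⟨_, hl, σ, h⟩ => grIso_of_perm σ hl h⟩

end SkewAlg

lemma exists_perm_fin_three_iff {R : Type*} [Mul R] {u v : Fin 3 → R} {l : R} :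
    (∃ σ : Equiv.Perm (Fin 3), ∀ i, v (σ i) = l * u i) ↔
      (v 0 = l * u 0 ∧ v 1 = l * u 1 ∧ v 2 = l * u 2) ∨
      (v 0 = l * u 0 ∧ v 1 = l * u 2 ∧ v 2 = l * u 1) ∨
      (v 0 = l * u 1 ∧ v 1 = l * u 0 ∧ v 2 = l * u 2) ∨
      (v 0 = l * u 1 ∧ v 1 = l * u 2 ∧ v 2 = l * u 0) ∨
      (v 0 = l * u 2 ∧ v 1 = l * u 0 ∧ v 2 = l * u 1) ∨
      (v 0 = l * u 2 ∧ v 1 = l * u 1 ∧ v 2 = l * u 0) := by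
  have build : ∀ a b c : Fin 3, (∃ σ : Equiv.Perm (Fin 3), σ 0 = a ∧ σ 1 = b ∧ σ 2 = c) →
      v a = l * u 0 → v b = l * u 1 → v c = l * u 2 →
      ∃ σ : Equiv.Perm (Fin 3), ∀ i, v (σ i) = l * u i := by
    rintro a b c ⟨σ, rfl, rfl, rfl⟩ h0 h1 h2
    exact ⟨σ, fun i => by fin_cases i <;> assumption⟩
  constructor
  · rintro ⟨σ, hσ⟩
    have hvalues : ∀ τ : Equiv.Perm (Fin 3),
        (τ 0 = 0 ∧ τ 1 = 1 ∧ τ 2 = 2) ∨ (τ 0 = 0 ∧ τ 1 = 2 ∧ τ 2 = 1) ∨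
        (τ 0 = 1 ∧ τ 1 = 0 ∧ τ 2 = 2) ∨ (τ 0 = 2 ∧ τ 1 = 0 ∧ τ 2 = 1) ∨
        (τ 0 = 1 ∧ τ 1 = 2 ∧ τ 2 = 0) ∨ (τ 0 = 2 ∧ τ 1 = 1 ∧ τ 2 = 0) := by
      decide
    rcases hvalues σ with ⟨h0, h1, h2⟩ | ⟨h0, h1, h2⟩ | ⟨h0, h1, h2⟩ | ⟨h0, h1, h2⟩ |
      ⟨h0, h1, h2⟩ | ⟨h0, h1, h2⟩ <;> simp [← hσ, h0, h1, h2]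
  · rintro (⟨h0, h1, h2⟩ | ⟨h0, h1, h2⟩ | ⟨h0, h1, h2⟩ | ⟨h0, h1, h2⟩ | ⟨h0, h1, h2⟩ |
      ⟨h0, h1, h2⟩)
    · exact build 0 1 2 (by decide) h0 h1 h2
    · exact build 0 2 1 (by decide) h0 h2 h1
    · exact build 1 0 2 (by decide) h1 h0 h2
    · exact build 2 0 1 (by decide) h2 h0 h1
    · exact build 1 2 0 (by decide) h1 h2 h0
    · exact build 2 1 0 (by decide) h2 h1 h0

lemma vec3_ne_zero_of_mul_ne_zero {a b c : ℂ} (h : a * b * c ≠ 0) : ∀ i, ![a, b, c] i ≠ 0 := by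
  simp only [mul_ne_zero_iff] at h
  intro i
  fin_cases i <;> simp [h.1.1, h.1.2, h.2]

theorem typeP1_iso_iff
    (α β γ α' β' γ' : ℂ)
    (h : α * β * γ ≠ 0)
    (h' : α' * β' * γ' ≠ 0)
    : GrIso
      (α • (X*Y) - β • (Y*X))
      (β • (Y*Z) - γ • (Z*Y))
      (γ • (Z*X) - α • (X*Z))
      (α' • (X*Y) - β' • (Y*X))
      (β' • (Y*Z) - γ' • (Z*Y))
      (γ' • (Z*X) - α' • (X*Z))
      ↔
      (∃ l : ℂ, l ≠ 0 ∧ (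
        (α' = l*α ∧ β' = l*β ∧ γ' = l*γ) ∨
        (α' = l*α ∧ β' = l*γ ∧ γ' = l*β) ∨
        (α' = l*β ∧ β' = l*α ∧ γ' = l*γ) ∨
        (α' = l*β ∧ β' = l*γ ∧ γ' = l*α) ∨
        (α' = l*γ ∧ β' = l*α ∧ γ' = l*β) ∨
        (α' = l*γ ∧ β' = l*β ∧ γ' = l*α))) :=
  (SkewAlg.grIso_iff_exists_perm (vec3_ne_zero_of_mul_ne_zero h)
      (vec3_ne_zero_of_mul_ne_zero h')).trans
    (exists_congr fun _ => and_congr_right fun _ => exists_perm_fin_three_iff)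
end
end

section
/- (Type P₂) For α ∈ ℂ with α ≠ 0, let A(α) = ℂ⟨x,y,z⟩/(xy − yx + y², xz − αzx + αzy, yz − αzy). For α, α' ∈ ℂ both nonzero, the algebras A(α) and A(α') are isomorphic as graded algebras if and only if α' = α. -/
noncomputable section

/-!
A graded isomorphism `A(α) ≃ A(α')` acts on the degree-one parts by an invertible matrix `g`, and
it pulls back degree-two functionals: a bilinear form `M` on `ℂ³` vanishing on the relators of
`A(α')` yields the form `gᵀ M g` vanishing on the relators of `A(α)`. Every such `M` is realised
by a representation of `A(α')` in nilpotent `5 × 5` matrices, whose products of two generators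
record `M` in the corner entry. Testing with the coordinate functionals of `xx` and `zz` shows that
`g` fixes the line of `y`; those of `zy` and `yx` then give `g₁₁ g₂₂ (α' - α) = 0`,
`g₁₁ g₂₀ (α' - 1) = 0` and `g₁₁ g₀₂ (α - 1) = 0`, which together with `det g ≠ 0` force `α' = α`.
-/

open Matrix

namespace TypeP2

abbrev rel₁ : F3 := X*Y - Y*X + Y*Y
abbrev rel₂ (β : ℂ) : F3 := X*Z - β • (Z*X) + β • (Z*Y)
abbrev rel₃ (β : ℂ) : F3 := Y*Z - β • (Z*Y)

abbrev Alg (β : ℂ) : Type := QuadAlg rel₁ (rel₂ β) (rel₃ β)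

abbrev mk (β : ℂ) : F3 →ₐ[ℂ] Alg β := RingQuot.mkAlgHom ℂ _

theorem mk_relators (β : ℂ) : mk β rel₁ = 0 ∧ mk β (rel₂ β) = 0 ∧ mk β (rel₃ β) = 0 := by
  refine ⟨?_, ?_, ?_⟩ <;> exact (RingQuot.mkAlgHom_rel ℂ ⟨by simp, rfl⟩).trans (map_zero _)

def gen (β : ℂ) : (Fin 3 → ℂ) →ₗ[ℂ] Alg β := Fintype.linearCombination ℂ ![mk β X, mk β Y, mk β Z]

theorem genSpan_eq_range (β : ℂ) : genSpan rel₁ (rel₂ β) (rel₃ β) = LinearMap.range (gen β) := by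
  rw [gen, Fintype.range_linearCombination, range_cons, range_cons_cons_empty]
  rfl

/-- `M`, read as a bilinear form on the degree-one part, vanishes on the three relators: it is a
linear functional on the degree-two part of `Alg β`. -/
def AnnihilatesRelators (β : ℂ) (M : Matrix (Fin 3) (Fin 3) ℂ) : Prop :=
  M 0 1 - M 1 0 + M 1 1 = 0 ∧ M 0 2 - β * M 2 0 + β * M 2 1 = 0 ∧ M 1 2 - β * M 2 1 = 0

theorem annihilatesRelators_zero (β : ℂ) : AnnihilatesRelators β 0 := by
  simp [AnnihilatesRelators]

theorem map_relators_eq_zero_iff {B : Type*} [Ring B] [Algebra ℂ B] [NoZeroSMulDivisors ℂ B]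
    (β : ℂ) (φ : F3 →ₐ[ℂ] B) (M : Matrix (Fin 3) (Fin 3) ℂ) {E : B} (hE : E ≠ 0)
    (hφ : ∀ i j, φ (FreeAlgebra.ι ℂ i * FreeAlgebra.ι ℂ j) = M i j • E) :
    (φ rel₁ = 0 ∧ φ (rel₂ β) = 0 ∧ φ (rel₃ β) = 0) ↔ AnnihilatesRelators β M := by
  simp only [X, Y, Z, map_add, map_sub, map_smul, hφ, smul_smul, ← sub_smul, ← add_smul,
    smul_eq_zero, hE, or_false, AnnihilatesRelators]

def pairingRep (M : Matrix (Fin 3) (Fin 3) ℂ) : (Fin 3 → ℂ) →ₗ[ℂ] Matrix (Fin 5) (Fin 5) ℂ where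
  toFun v := !![0, v 0, v 1, v 2, 0;
                0, 0, 0, 0, (M *ᵥ v) 0;
                0, 0, 0, 0, (M *ᵥ v) 1;
                0, 0, 0, 0, (M *ᵥ v) 2;
                0, 0, 0, 0, 0]
  map_add' u v := by
    ext i j; fin_cases i <;> fin_cases j <;> simp [mulVec_add]
  map_smul' c v := by
    ext i j; fin_cases i <;> fin_cases j <;> simp [mulVec_smul]

theorem pairingRep_mul_pairingRep (M : Matrix (Fin 3) (Fin 3) ℂ) (u v : Fin 3 → ℂ) :
    pairingRep M u * pairingRep M v = (u ⬝ᵥ M *ᵥ v) • single 0 4 1 := by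
  ext i j
  fin_cases i <;> fin_cases j <;>
    simp [pairingRep, Matrix.mul_apply, Fin.sum_univ_five, dotProduct, Fin.sum_univ_three]

theorem pairingRep_apply_zero (M : Matrix (Fin 3) (Fin 3) ℂ) (v : Fin 3 → ℂ) (k : Fin 3) :
    pairingRep M v 0 k.succ.castSucc = v k := by
  fin_cases k <;> rfl

theorem single_zero_four_ne_zero : (single 0 4 1 : Matrix (Fin 5) (Fin 5) ℂ) ≠ 0 :=
  fun h => by simpa using congrFun (congrFun h 0) 4

def pairingFree (M : Matrix (Fin 3) (Fin 3) ℂ) : F3 →ₐ[ℂ] Matrix (Fin 5) (Fin 5) ℂ :=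
  FreeAlgebra.lift ℂ fun i => pairingRep M (Pi.single i 1)

theorem pairingFree_mul (M : Matrix (Fin 3) (Fin 3) ℂ) (i j : Fin 3) :
    pairingFree M (FreeAlgebra.ι ℂ i * FreeAlgebra.ι ℂ j) = M i j • single 0 4 1 := by
  simp [pairingFree, pairingRep_mul_pairingRep]

def pairingHom (β : ℂ) (M : Matrix (Fin 3) (Fin 3) ℂ) (hM : AnnihilatesRelators β M) :
    Alg β →ₐ[ℂ] Matrix (Fin 5) (Fin 5) ℂ :=
  RingQuot.liftAlgHom ℂ ⟨pairingFree M, by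
    obtain ⟨h₁, h₂, h₃⟩ :=
      (map_relators_eq_zero_iff β _ M single_zero_four_ne_zero (pairingFree_mul M)).2 hM
    rintro _ _ ⟨rfl | rfl | rfl, rfl⟩ <;> rw [map_zero] <;> assumption⟩

theorem pairingHom_gen (β : ℂ) (M : Matrix (Fin 3) (Fin 3) ℂ) (hM : AnnihilatesRelators β M)
    (v : Fin 3 → ℂ) : pairingHom β M hM (gen β v) = pairingRep M v := by
  have h : (pairingHom β M hM).toLinearMap ∘ₗ gen β = pairingRep M := by
    refine LinearMap.pi_ext' fun i => LinearMap.ext_ring ?_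
    fin_cases i <;> simp [gen, pairingHom, pairingFree, X, Y, Z]
  exact LinearMap.congr_fun h v

theorem gen_injective (β : ℂ) : Function.Injective (gen β) := by
  intro u v huv
  have h := congrArg (pairingHom β 0 (annihilatesRelators_zero β)) huv
  simp only [pairingHom_gen] at h
  funext k
  rw [← pairingRep_apply_zero 0 u k, ← pairingRep_apply_zero 0 v k, h]

theorem exists_matrix_of_grIso {α α' : ℂ}
    (h : GrIso rel₁ (rel₂ α) (rel₃ α) rel₁ (rel₂ α') (rel₃ α')) :
    ∃ (e : Alg α →ₐ[ℂ] Alg α') (g : Matrix (Fin 3) (Fin 3) ℂ),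
      g.det ≠ 0 ∧ ∀ v, e (gen α v) = gen α' (g *ᵥ v) := by
  obtain ⟨e, he⟩ := h
  rw [genSpan_eq_range, genSpan_eq_range] at he
  let L : (Fin 3 → ℂ) ≃ₗ[ℂ] (Fin 3 → ℂ) :=
    (LinearEquiv.ofInjective _ (gen_injective α)).trans <|
      (e.toLinearEquiv.submoduleMap _).trans <|
        (LinearEquiv.ofEq _ _ he).trans (LinearEquiv.ofInjective _ (gen_injective α')).symm
  refine ⟨e, LinearMap.toMatrix' L, ?_, fun v => ?_⟩
  · rw [LinearMap.det_toMatrix']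
    exact L.isUnit_det'.ne_zero
  · rw [LinearMap.toMatrix'_mulVec]
    simp [L]

theorem annihilatesRelators_pullback {α α' : ℂ} (e : Alg α →ₐ[ℂ] Alg α')
    (g : Matrix (Fin 3) (Fin 3) ℂ) (he : ∀ v, e (gen α v) = gen α' (g *ᵥ v))
    {M : Matrix (Fin 3) (Fin 3) ℂ} (hM : AnnihilatesRelators α' M) :
    AnnihilatesRelators α (gᵀ * M * g) := by
  let φ := ((pairingHom α' M hM).comp e).comp (mk α)
  have hgen : ∀ i, φ (FreeAlgebra.ι ℂ i) = pairingRep M (g.col i) := by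
    intro i
    have : mk α (FreeAlgebra.ι ℂ i) = gen α (Pi.single i 1) := by
      fin_cases i <;> simp [gen, X, Y, Z]
    simp [φ, this, he, pairingHom_gen]
  have hφ : ∀ i j, φ (FreeAlgebra.ι ℂ i * FreeAlgebra.ι ℂ j) = (gᵀ * M * g) i j • single 0 4 1 := by
    intro i j
    rw [map_mul, hgen, hgen, pairingRep_mul_pairingRep, mul_mul_apply]
    rfl
  obtain ⟨h₁, h₂, h₃⟩ := mk_relators α
  refine (map_relators_eq_zero_iff α φ _ single_zero_four_ne_zero hφ).1 ⟨?_, ?_, ?_⟩ <;>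
    simp [φ, h₁, h₂, h₃]

theorem eq_of_forall_annihilatesRelators {α α' : ℂ} (g : Matrix (Fin 3) (Fin 3) ℂ)
    (hg : g.det ≠ 0)
    (h : ∀ M, AnnihilatesRelators α' M → AnnihilatesRelators α (gᵀ * M * g)) : α' = α := by
  -- coordinate functionals of `xx`, `zz`, `zy`, `yx` on the degree-two part of `Alg α'`
  have hxx := (h (single 0 0 1) (by simp [AnnihilatesRelators])).1
  have hzz := (h (single 2 2 1) (by simp [AnnihilatesRelators])).1
  obtain ⟨hzy₁, -, hzy₃⟩ := h !![0, 0, -α'; 0, 0, α'; 0, 1, 0] (by simp [AnnihilatesRelators])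
  have hyx := (h !![0, 1, 0; 1, 0, 0; 0, 0, 0] (by simp [AnnihilatesRelators])).2.2
  simp only [mul_apply, Fin.sum_univ_three, transpose_apply, single_apply_same, single_apply_of_ne,
    of_apply, cons_val', cons_val_zero, cons_val_one, cons_val, cons_val_fin_one, Fin.reduceEq,
    zero_ne_one, not_false_eq_true, and_true, and_false, and_self, mul_one, mul_zero, zero_mul,
    add_zero, zero_add, mul_neg] at hxx hzz hzy₁ hzy₃ hyx
  have hg01 : g 0 1 = 0 := pow_eq_zero_iff two_ne_zero |>.1 (by linear_combination hxx)
  have hg21 : g 2 1 = 0 := pow_eq_zero_iff two_ne_zero |>.1 (by linear_combination hzz)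
  have hdet : g 1 1 * (g 0 0 * g 2 2 - g 0 2 * g 2 0) ≠ 0 := by
    rw [det_fin_three, hg01, hg21] at hg
    convert hg using 1
    ring
  obtain ⟨hg11, hminor⟩ := mul_ne_zero_iff.1 hdet
  have hα' : g 1 1 * g 2 0 * (α' - 1) = 0 := by
    rw [hg01, hg21] at hzy₁; linear_combination -hzy₁
  have hα : g 1 1 * g 0 2 * (α - 1) = 0 := by
    rw [hg01] at hyx; linear_combination -hyx
  have hαα' : g 1 1 * g 2 2 * (α' - α) = 0 := by
    rw [hg01, hg21] at hzy₃; linear_combination hzy₃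
  by_contra hne
  have hg22 : g 2 2 = 0 := by simpa [hg11, sub_eq_zero, hne] using hαα'
  obtain ⟨hg02, hg20⟩ : g 0 2 ≠ 0 ∧ g 2 0 ≠ 0 := by simpa [hg22] using hminor
  have hα'_one : α' = 1 := by simpa [hg11, hg20, sub_eq_zero] using hα'
  have hα_one : α = 1 := by simpa [hg11, hg02, sub_eq_zero] using hα
  exact hne (hα'_one.trans hα_one.symm)

end TypeP2

theorem typeP2_iso_iff_general
    (α α' : ℂ)
    : GrIso
      (X*Y - Y*X + Y*Y)
      (X*Z - α • (Z*X) + α • (Z*Y))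
      (Y*Z - α • (Z*Y))
      (X*Y - Y*X + Y*Y)
      (X*Z - α' • (Z*X) + α' • (Z*Y))
      (Y*Z - α' • (Z*Y))
      ↔
      (α' = α) := by
  constructor
  · intro hiso
    obtain ⟨e, g, hg, he⟩ := TypeP2.exists_matrix_of_grIso hiso
    exact TypeP2.eq_of_forall_annihilatesRelators g hg fun _ =>
      TypeP2.annihilatesRelators_pullback e g he
  · rintro rfl
    exact ⟨AlgEquiv.refl, Submodule.map_id _⟩

theorem typeP2_iso_iff
    (α α' : ℂ)
    (h : α ≠ 0)
    (h' : α' ≠ 0)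
    : GrIso
      (X*Y - Y*X + Y*Y)
      (X*Z - α • (Z*X) + α • (Z*Y))
      (Y*Z - α • (Z*Y))
      (X*Y - Y*X + Y*Y)
      (X*Z - α' • (Z*X) + α' • (Z*Y))
      (Y*Z - α' • (Z*Y))
      ↔
      (α' = α) :=
  typeP2_iso_iff_general α α'
end
end

section
/- (Type S₁) For α, β, γ ∈ ℂ with αβγ ≠ 0 and αβγ ≠ 1, let A(α,β,γ) = ℂ⟨x,y,z⟩/(yz − αzy, zx − βxz, xy − γyx). For α', β', γ' ∈ ℂ with α'β'γ' ≠ 0 and α'β'γ' ≠ 1, the algebras A(α,β,γ) and A(α',β',γ') are isomorphic as graded algebras if and only if (α',β',γ') is one of the six triples (α,β,γ), (β,γ,α), (γ,α,β), (α⁻¹,γ⁻¹,β⁻¹), (β⁻¹,α⁻¹,γ⁻¹), (γ⁻¹,β⁻¹,α⁻¹). -/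
noncomputable section

/-!
A graded isomorphism `A(α,β,γ) ≃ A(α',β',γ')` sends `x, y, z` to linear forms whose coefficient
rows `p, q, r` are nonzero. In `A(α',β',γ')` the generators skew-commute,
`x_j x_i = κ_ij x_i x_j` with `κ = qmat α' β' γ'`, and the ordered quadratic monomials are linearly independent (as one sees
by letting the algebra act on the monomial basis of the quantum polynomial ring), so the images of
the three defining relations become polynomial identities in `p, q, r`. If two of the rows share a
nonzero coordinate, these identities force `αβγ = 1`; hence the rows are supported on distinct
coordinates, i.e. the substitution is a permutation of the generators up to scaling, and comparing
the skew-commutation scalars along the permutation yields the six triples. Conversely, each of the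
six permutations of `x, y, z` is an isomorphism between the corresponding algebras.
-/

section QCommutes

variable {ι : Type*} {κ : Matrix ι ι ℂ} {s α β γ : ℂ} {u v p q r : ι → ℂ}

/-- In the algebra with relations `x j * x i = κ i j • (x i * x j)`, put `ℓ u = ∑ i, u i • x i`.
`QCommutes κ s u v` says that the coefficients of `ℓ u * ℓ v - s • (ℓ v * ℓ u)` on the ordered
monomials vanish. -/
def QCommutes (κ : Matrix ι ι ℂ) (s : ℂ) (u v : ι → ℂ) : Prop :=
  ∀ i j, (u i * v j - s * (v i * u j)) + κ i j * (u j * v i - s * (v j * u i)) = 0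

lemma QCommutes.eq_one (h : QCommutes κ s u v) {i : ι} (hκ : κ i i = 1) (hu : u i ≠ 0)
    (hv : v i ≠ 0) : s = 1 := by
  have h2 : (2 * (1 - s)) * (u i * v i) = 0 := by
    linear_combination h i i - (u i * v i - s * (v i * u i)) * hκ
  linear_combination -(mul_eq_zero.mp h2).resolve_right (mul_ne_zero hu hv) / 2

lemma QCommutes.mul_eq_one (h : QCommutes κ s u v) {i j : ι} (hu : u i ≠ 0) (hv : v j ≠ 0)
    (h0 : u j * v i = 0) : s * κ i j = 1 := by
  have h1 : (1 - s * κ i j) * (u i * v j) = 0 := by linear_combination h i j - (κ i j - s) * h0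
  linear_combination -(mul_eq_zero.mp h1).resolve_right (mul_ne_zero hu hv)

lemma QCommutes.mul_apply_eq_zero (hdiag : ∀ i, κ i i = 1) (hrecip : ∀ i j, κ i j * κ j i = 1)
    (hpq : QCommutes κ γ p q) (hqr : QCommutes κ α q r) (hrp : QCommutes κ β r p)
    (hαβγ : α * β * γ ≠ 1) (hp : p ≠ 0) (i : ι) : q i * r i = 0 := by
  by_contra hqri
  obtain ⟨hqi, hri⟩ := mul_ne_zero_iff.mp hqri
  have hα : α = 1 := hqr.eq_one (hdiag i) hqi hri
  have hpi : p i = 0 := by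
    by_contra hpi
    exact hαβγ (by rw [hα, hrp.eq_one (hdiag i) hri hpi, hpq.eq_one (hdiag i) hpi hqi]; ring)
  obtain ⟨j, hpj⟩ := Function.ne_iff.mp hp
  have hβ : β * κ i j = 1 := hrp.mul_eq_one hri hpj (by simp [hpi])
  have hγ : γ * κ j i = 1 := hpq.mul_eq_one hpj hqi (by simp [hpi])
  exact hαβγ (by linear_combination β * γ * hα - β * γ * hrecip i j + γ * κ j i * hβ + hγ)

theorem QCommutes.exists_distinct_mul_eq_one (hdiag : ∀ i, κ i i = 1) (hrecip : ∀ i j, κ i j * κ j i = 1)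
    (hpq : QCommutes κ γ p q) (hqr : QCommutes κ α q r) (hrp : QCommutes κ β r p)
    (hαβγ : α * β * γ ≠ 1) (hp : p ≠ 0) (hq : q ≠ 0) (hr : r ≠ 0) :
    ∃ i j k, i ≠ j ∧ j ≠ k ∧ k ≠ i ∧ γ * κ i j = 1 ∧ α * κ j k = 1 ∧ β * κ k i = 1 := by
  have hqr0 := QCommutes.mul_apply_eq_zero hdiag hrecip hpq hqr hrp hαβγ hp
  have hrp0 := QCommutes.mul_apply_eq_zero hdiag hrecip hqr hrp hpq
    (fun h => hαβγ (by linear_combination h)) hq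
  have hpq0 := QCommutes.mul_apply_eq_zero hdiag hrecip hrp hpq hqr
    (fun h => hαβγ (by linear_combination h)) hr
  obtain ⟨i, hpi⟩ := Function.ne_iff.mp hp
  obtain ⟨j, hqj⟩ := Function.ne_iff.mp hq
  obtain ⟨k, hrk⟩ := Function.ne_iff.mp hr
  refine ⟨i, j, k, ?_, ?_, ?_, hpq.mul_eq_one hpi hqj ?_, hqr.mul_eq_one hqj hrk ?_,
    hrp.mul_eq_one hrk hpi ?_⟩
  · rintro rfl; exact mul_ne_zero hpi hqj (hpq0 i)
  · rintro rfl; exact mul_ne_zero hqj hrk (hqr0 j)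
  · rintro rfl; exact mul_ne_zero hrk hpi (hrp0 k)
  · rw [(mul_eq_zero.mp (hpq0 j)).resolve_right hqj, zero_mul]
  · rw [(mul_eq_zero.mp (hqr0 k)).resolve_right hrk, zero_mul]
  · rw [(mul_eq_zero.mp (hrp0 i)).resolve_right hpi, zero_mul]

end QCommutes

def qmat (a b c : ℂ) : Matrix (Fin 3) (Fin 3) ℂ := !![1, c⁻¹, b; c, 1, a⁻¹; b⁻¹, a, 1]

lemma qmat_self (a b c : ℂ) (i : Fin 3) : qmat a b c i i = 1 := by
  fin_cases i <;> rfl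

lemma qmat_mul_qmat {a b c : ℂ} (ha : a ≠ 0) (hb : b ≠ 0) (hc : c ≠ 0) (i j : Fin 3) :
    qmat a b c i j * qmat a b c j i = 1 := by
  fin_cases i <;> fin_cases j <;> simp [qmat, ha, hb, hc]

lemma eq_of_mul_qmat_eq_one {α β γ a b c : ℂ} (hα : α ≠ 0) (hβ : β ≠ 0) (hγ : γ ≠ 0)
    {i j k : Fin 3} (hij : i ≠ j) (hjk : j ≠ k) (hki : k ≠ i)
    (h₁ : γ * qmat a b c i j = 1) (h₂ : α * qmat a b c j k = 1) (h₃ : β * qmat a b c k i = 1) :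
    (a = α ∧ b = β ∧ c = γ) ∨ (a = β ∧ b = γ ∧ c = α) ∨ (a = γ ∧ b = α ∧ c = β) ∨
      (a = α⁻¹ ∧ b = γ⁻¹ ∧ c = β⁻¹) ∨ (a = β⁻¹ ∧ b = α⁻¹ ∧ c = γ⁻¹) ∨
      (a = γ⁻¹ ∧ b = β⁻¹ ∧ c = α⁻¹) := by
  fin_cases i <;> fin_cases j <;> fin_cases k <;>
    simp_all [qmat, mul_eq_one_iff_inv_eq₀, eq_comm]

lemma exists_perm_qmat_eq {α β γ a b c : ℂ}
    (h : (a = α ∧ b = β ∧ c = γ) ∨ (a = β ∧ b = γ ∧ c = α) ∨ (a = γ ∧ b = α ∧ c = β) ∨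
      (a = α⁻¹ ∧ b = γ⁻¹ ∧ c = β⁻¹) ∨ (a = β⁻¹ ∧ b = α⁻¹ ∧ c = γ⁻¹) ∨
      (a = γ⁻¹ ∧ b = β⁻¹ ∧ c = α⁻¹)) :
    ∃ σ : Equiv.Perm (Fin 3), ∀ i j, qmat a b c (σ i) (σ j) = qmat α β γ i j := by
  rcases h with ⟨rfl, rfl, rfl⟩ | ⟨rfl, rfl, rfl⟩ | ⟨rfl, rfl, rfl⟩ | ⟨rfl, rfl, rfl⟩ |
    ⟨rfl, rfl, rfl⟩ | ⟨rfl, rfl, rfl⟩ <;>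
  [use 1; use (finRotate 3).symm; use finRotate 3; use Equiv.swap 1 2; use Equiv.swap 0 1;
    use Equiv.swap 0 2] <;>
  intro i j <;> fin_cases i <;> fin_cases j <;> simp [qmat, Equiv.swap_apply_def]

def weightedShift {M : Type*} [AddCommMonoid M] (w : M → ℂ) (d : M) : Module.End ℂ (M →₀ ℂ) :=
  Finsupp.lsum ℂ fun m => w m • Finsupp.lsingle (m + d)

section weightedShift

variable {M : Type*} [AddCommMonoid M]

@[simp] lemma weightedShift_single (w : M → ℂ) (d m : M) (x : ℂ) :
    weightedShift w d (Finsupp.single m x) = Finsupp.single (m + d) (w m * x) := by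
  simp [weightedShift, Finsupp.smul_single]

lemma weightedShift_mul_weightedShift {w w' : M → ℂ} {d d' : M} {s : ℂ}
    (h : ∀ m, w (m + d') * w' m = s * (w' (m + d) * w m)) :
    weightedShift w d * weightedShift w' d' = s • (weightedShift w' d' * weightedShift w d) := by
  refine Finsupp.lhom_ext fun m x => ?_
  simp only [Module.End.mul_apply, LinearMap.smul_apply, weightedShift_single,
    Finsupp.smul_single, smul_eq_mul, add_right_comm m d d', ← mul_assoc, h]

end weightedShift

abbrev TypeS1 (a b c : ℂ) : Type := QuadAlg (Y*Z - a • (Z*Y)) (Z*X - b • (X*Z)) (X*Y - c • (Y*X))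

namespace TypeS1

variable {a b c : ℂ}

def gen (a b c : ℂ) (i : Fin 3) : TypeS1 a b c := RingQuot.mkAlgHom ℂ _ (FreeAlgebra.ι ℂ i)

lemma genSpan_eq (a b c : ℂ) :
    genSpan (Y*Z - a • (Z*Y)) (Z*X - b • (X*Z)) (X*Y - c • (Y*X)) =
      Submodule.span ℂ (Set.range (gen a b c)) := by
  rw [genSpan]
  congr 1
  ext w
  simp only [Set.mem_insert_iff, Set.mem_singleton_iff, Set.mem_range, Fin.exists_fin_succ,
    Fin.exists_fin_zero, or_false]
  exact or_congr eq_comm (or_congr eq_comm eq_comm)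

lemma gen_one_mul_gen_two : gen a b c 1 * gen a b c 2 = a • (gen a b c 2 * gen a b c 1) := by
  have h := RingQuot.mkAlgHom_rel ℂ
    (s := rel3 (Y*Z - a • (Z*Y)) (Z*X - b • (X*Z)) (X*Y - c • (Y*X))) ⟨Or.inl rfl, rfl⟩
  rwa [map_sub, map_smul, map_mul, map_mul, map_zero, sub_eq_zero] at h

lemma gen_two_mul_gen_zero : gen a b c 2 * gen a b c 0 = b • (gen a b c 0 * gen a b c 2) := by
  have h := RingQuot.mkAlgHom_rel ℂ
    (s := rel3 (Y*Z - a • (Z*Y)) (Z*X - b • (X*Z)) (X*Y - c • (Y*X))) ⟨Or.inr (Or.inl rfl), rfl⟩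
  rwa [map_sub, map_smul, map_mul, map_mul, map_zero, sub_eq_zero] at h

lemma gen_zero_mul_gen_one : gen a b c 0 * gen a b c 1 = c • (gen a b c 1 * gen a b c 0) := by
  have h := RingQuot.mkAlgHom_rel ℂ
    (s := rel3 (Y*Z - a • (Z*Y)) (Z*X - b • (X*Z)) (X*Y - c • (Y*X))) ⟨Or.inr (Or.inr rfl), rfl⟩
  rwa [map_sub, map_smul, map_mul, map_mul, map_zero, sub_eq_zero] at h

lemma gen_mul_gen (ha : a ≠ 0) (hb : b ≠ 0) (hc : c ≠ 0) (i j : Fin 3) :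
    gen a b c j * gen a b c i = qmat a b c i j • (gen a b c i * gen a b c j) := by
  fin_cases i <;> fin_cases j <;>
    simp [qmat, gen_one_mul_gen_two, gen_two_mul_gen_zero, gen_zero_mul_gen_one, smul_smul, ha, hb,
      hc]

section lift

variable {B : Type*} [Ring B] [Algebra ℂ B] (u : Fin 3 → B)
  (h₁ : u 1 * u 2 = a • (u 2 * u 1)) (h₂ : u 2 * u 0 = b • (u 0 * u 2))
  (h₃ : u 0 * u 1 = c • (u 1 * u 0))

def lift : TypeS1 a b c →ₐ[ℂ] B :=
  RingQuot.liftAlgHom ℂ ⟨FreeAlgebra.lift ℂ u, by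
    rintro _ _ ⟨rfl | rfl | rfl, rfl⟩ <;> simp [X, Y, Z, h₁, h₂, h₃]⟩

@[simp] lemma lift_gen (i : Fin 3) : lift u h₁ h₂ h₃ (gen a b c i) = u i := by
  simp [lift, gen, RingQuot.liftAlgHom_mkAlgHom_apply]

end lift

lemma hom_ext {B : Type*} [Ring B] [Algebra ℂ B] {f g : TypeS1 a b c →ₐ[ℂ] B}
    (h : ∀ i, f (gen a b c i) = g (gen a b c i)) : f = g :=
  RingQuot.ringQuot_ext' ℂ _ _ (FreeAlgebra.hom_ext (funext h))

lemma gen_ne_zero (a b c : ℂ) (i : Fin 3) : gen a b c i ≠ 0 := by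
  intro h
  have hχ := lift_gen (a := a) (b := b) (c := c) (Pi.single i (1 : ℂ))
    (by fin_cases i <;> simp) (by fin_cases i <;> simp) (by fin_cases i <;> simp) i
  simp [h] at hχ

/-- Left multiplication by `x`, `y`, `z` on the monomials `x^i y^j z^k` of the quantum
polynomial ring. -/
def rep (ha : a ≠ 0) (hc : c ≠ 0) : TypeS1 a b c →ₐ[ℂ] Module.End ℂ ((ℕ × ℕ × ℕ) →₀ ℂ) :=
  lift ![weightedShift 1 (1, 0, 0), weightedShift (fun m => c⁻¹ ^ m.1) (0, 1, 0),
      weightedShift (fun m => b ^ m.1 * a⁻¹ ^ m.2.1) (0, 0, 1)]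
    (weightedShift_mul_weightedShift fun m => by simp [pow_succ]; field_simp)
    (weightedShift_mul_weightedShift fun m => by simp [pow_succ]; ring)
    (weightedShift_mul_weightedShift fun m => by simp [pow_succ]; field_simp)

lemma coeff_add_qmat_mul_coeff_eq_zero (ha : a ≠ 0) (hb : b ≠ 0) (hc : c ≠ 0)
    (C : Matrix (Fin 3) (Fin 3) ℂ) (h : ∑ i, ∑ j, C i j • (gen a b c i * gen a b c j) = 0)
    (i j : Fin 3) : C i j + qmat a b c i j * C j i = 0 := by
  have h0 := congrArg (fun f => rep ha hc f (Finsupp.single 0 1)) h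
  simp only [rep, inv_pow, Fin.sum_univ_three, Fin.isValue, map_add, map_smul, map_mul, lift_gen,
    Matrix.cons_val_zero, Matrix.cons_val_one, Matrix.cons_val, LinearMap.add_apply,
    LinearMap.smul_apply, Module.End.mul_apply, weightedShift_single, zero_add, Pi.one_apply,
    mul_one, Prod.mk_add_mk, Nat.reduceAdd, add_zero, Finsupp.smul_single, smul_eq_mul,
    Prod.fst_zero, pow_zero, inv_one, Prod.snd_zero, pow_one, one_mul, map_zero,
    LinearMap.zero_apply] at h0
  have := DFunLike.congr_fun h0
    (![(1, 0, 0), (0, 1, 0), (0, 0, 1)] i + ![(1, 0, 0), (0, 1, 0), (0, 0, 1)] j)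
  fin_cases i <;> fin_cases j <;> simp [qmat] at this ⊢ <;>
    (try field_simp at this ⊢) <;> linear_combination this

lemma sum_smul_gen_mul_sum_smul_gen (u v : Fin 3 → ℂ) :
    (∑ i, u i • gen a b c i) * (∑ j, v j • gen a b c j) =
      ∑ i, ∑ j, (u i * v j) • (gen a b c i * gen a b c j) := by
  simp only [Finset.sum_mul_sum, smul_mul_smul_comm]

lemma qCommutes_of_mul_eq_smul_mul (ha : a ≠ 0) (hb : b ≠ 0) (hc : c ≠ 0) {s : ℂ}
    {u v : Fin 3 → ℂ}
    (h : (∑ i, u i • gen a b c i) * (∑ i, v i • gen a b c i) =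
      s • ((∑ i, v i • gen a b c i) * (∑ i, u i • gen a b c i))) :
    QCommutes (qmat a b c) s u v := by
  refine coeff_add_qmat_mul_coeff_eq_zero ha hb hc (fun i j => u i * v j - s * (v i * u j)) ?_
  have hC (i j : Fin 3) : (u i * v j - s * (v i * u j)) • (gen a b c i * gen a b c j) =
      (u i * v j) • (gen a b c i * gen a b c j) -
        s • ((v i * u j) • (gen a b c i * gen a b c j)) := by
    module
  simp only [hC, Finset.sum_sub_distrib, ← Finset.smul_sum, ← sum_smul_gen_mul_sum_smul_gen, h,
    sub_self]

theorem exists_qCommutes_of_grIso {α β γ : ℂ} (ha : a ≠ 0) (hb : b ≠ 0) (hc : c ≠ 0)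
    (h : GrIso (Y*Z - α • (Z*Y)) (Z*X - β • (X*Z)) (X*Y - γ • (Y*X))
      (Y*Z - a • (Z*Y)) (Z*X - b • (X*Z)) (X*Y - c • (Y*X))) :
    ∃ p q r : Fin 3 → ℂ, p ≠ 0 ∧ q ≠ 0 ∧ r ≠ 0 ∧ QCommutes (qmat a b c) γ p q ∧
      QCommutes (qmat a b c) α q r ∧ QCommutes (qmat a b c) β r p := by
  obtain ⟨e, he⟩ := h
  have hmem (i : Fin 3) : ∃ u : Fin 3 → ℂ, ∑ j, u j • gen a b c j = e (gen α β γ i) := by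
    rw [← Submodule.mem_span_range_iff_exists_fun, ← genSpan_eq, ← he, genSpan_eq]
    exact Submodule.mem_map_of_mem (Submodule.subset_span (Set.mem_range_self i))
  choose M hM using hmem
  have hne (i : Fin 3) : M i ≠ 0 := by
    intro hi
    refine gen_ne_zero α β γ i ((map_eq_zero_iff e e.injective).mp ?_)
    rw [← hM, hi]
    simp
  have hrel {s : ℂ} {i j : Fin 3}
      (h : gen α β γ i * gen α β γ j = s • (gen α β γ j * gen α β γ i)) :
      QCommutes (qmat a b c) s (M i) (M j) :=
    qCommutes_of_mul_eq_smul_mul ha hb hc (by rw [hM, hM, ← map_mul, ← map_mul, h, map_smul])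
  exact ⟨M 0, M 1, M 2, hne 0, hne 1, hne 2, hrel gen_zero_mul_gen_one,
    hrel gen_one_mul_gen_two, hrel gen_two_mul_gen_zero⟩

def permHom (σ : Equiv.Perm (Fin 3)) {a' b' c' : ℂ} (ha' : a' ≠ 0) (hb' : b' ≠ 0) (hc' : c' ≠ 0)
    (h : ∀ i j, qmat a' b' c' (σ i) (σ j) = qmat a b c i j) :
    TypeS1 a b c →ₐ[ℂ] TypeS1 a' b' c' :=
  lift (fun i => gen a' b' c' (σ i)) (by rw [gen_mul_gen ha' hb' hc', h]; rfl)
    (by rw [gen_mul_gen ha' hb' hc', h]; rfl) (by rw [gen_mul_gen ha' hb' hc', h]; rfl)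

theorem grIso_of_perm {a' b' c' : ℂ} (σ : Equiv.Perm (Fin 3)) (ha : a ≠ 0) (hb : b ≠ 0)
    (hc : c ≠ 0) (ha' : a' ≠ 0) (hb' : b' ≠ 0) (hc' : c' ≠ 0)
    (h : ∀ i j, qmat a' b' c' (σ i) (σ j) = qmat a b c i j) :
    GrIso (Y*Z - a • (Z*Y)) (Z*X - b • (X*Z)) (X*Y - c • (Y*X))
      (Y*Z - a' • (Z*Y)) (Z*X - b' • (X*Z)) (X*Y - c' • (Y*X)) := by
  have h' (i j : Fin 3) : qmat a b c (σ.symm i) (σ.symm j) = qmat a' b' c' i j := by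
    simpa using (h (σ.symm i) (σ.symm j)).symm
  refine ⟨AlgEquiv.ofAlgHom (permHom σ ha' hb' hc' h) (permHom σ.symm ha hb hc h')
    (hom_ext fun i => by simp only [permHom, AlgHom.comp_apply, lift_gen,
      Equiv.apply_symm_apply, AlgHom.id_apply])
    (hom_ext fun i => by simp only [permHom, AlgHom.comp_apply, lift_gen,
      Equiv.symm_apply_apply, AlgHom.id_apply]), ?_⟩
  rw [genSpan_eq, genSpan_eq, Submodule.map_span, ← Set.range_comp,
    ← σ.surjective.range_comp (gen a' b' c')]
  congr 2
  ext i
  simp [permHom]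

end TypeS1

theorem typeS1_iso_iff_general
    (α β γ α' β' γ' : ℂ)
    (h0 : α * β * γ ≠ 0)
    (h1 : α * β * γ ≠ 1)
    (h0' : α' * β' * γ' ≠ 0)
    : GrIso
      (Y*Z - α • (Z*Y))
      (Z*X - β • (X*Z))
      (X*Y - γ • (Y*X))
      (Y*Z - α' • (Z*Y))
      (Z*X - β' • (X*Z))
      (X*Y - γ' • (Y*X))
      ↔
      ((α' = α ∧ β' = β ∧ γ' = γ) ∨
        (α' = β ∧ β' = γ ∧ γ' = α) ∨
        (α' = γ ∧ β' = α ∧ γ' = β) ∨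
        (α' = α⁻¹ ∧ β' = γ⁻¹ ∧ γ' = β⁻¹) ∨
        (α' = β⁻¹ ∧ β' = α⁻¹ ∧ γ' = γ⁻¹) ∨
        (α' = γ⁻¹ ∧ β' = β⁻¹ ∧ γ' = α⁻¹)) := by
  obtain ⟨⟨hα, hβ⟩, hγ⟩ := (mul_ne_zero_iff.mp h0).imp_left mul_ne_zero_iff.mp
  obtain ⟨⟨hα', hβ'⟩, hγ'⟩ := (mul_ne_zero_iff.mp h0').imp_left mul_ne_zero_iff.mp
  constructor
  · intro h
    obtain ⟨p, q, r, hp, hq, hr, hpq, hqr, hrp⟩ := TypeS1.exists_qCommutes_of_grIso hα' hβ' hγ' h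
    obtain ⟨i, j, k, hij, hjk, hki, h₁, h₂, h₃⟩ :=
      QCommutes.exists_distinct_mul_eq_one (qmat_self α' β' γ') (qmat_mul_qmat hα' hβ' hγ') hpq hqr
        hrp h1 hp hq hr
    exact eq_of_mul_qmat_eq_one hα hβ hγ hij hjk hki h₁ h₂ h₃
  · intro h
    obtain ⟨σ, hσ⟩ := exists_perm_qmat_eq h
    exact TypeS1.grIso_of_perm σ hα hβ hγ hα' hβ' hγ' hσ

theorem typeS1_iso_iff
    (α β γ α' β' γ' : ℂ)
    (h0 : α * β * γ ≠ 0)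
    (h1 : α * β * γ ≠ 1)
    (h0' : α' * β' * γ' ≠ 0)
    (h1' : α' * β' * γ' ≠ 1)
    : GrIso
      (Y*Z - α • (Z*Y))
      (Z*X - β • (X*Z))
      (X*Y - γ • (Y*X))
      (Y*Z - α' • (Z*Y))
      (Z*X - β' • (X*Z))
      (X*Y - γ' • (Y*X))
      ↔
      ((α' = α ∧ β' = β ∧ γ' = γ) ∨
        (α' = β ∧ β' = γ ∧ γ' = α) ∨
        (α' = γ ∧ β' = α ∧ γ' = β) ∨
        (α' = α⁻¹ ∧ β' = γ⁻¹ ∧ γ' = β⁻¹) ∨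
        (α' = β⁻¹ ∧ β' = α⁻¹ ∧ γ' = γ⁻¹) ∨
        (α' = γ⁻¹ ∧ β' = β⁻¹ ∧ γ' = α⁻¹)) :=
  typeS1_iso_iff_general α β γ α' β' γ' h0 h1 h0'
end
end

section
/- (Type S₂) For α, β ∈ ℂ with αβ ≠ 0, let A(α,β) = ℂ⟨x,y,z⟩/(zx − αyz, xz − βzy, x² + αβy²). For α', β' ∈ ℂ with α'β' ≠ 0, the algebras A(α,β) and A(α',β') are isomorphic as graded algebras if and only if (α':β') = (α:β) as points of ℙ¹, i.e. there exists a nonzero scalar λ ∈ ℂ with (α',β') = (λα, λβ). -/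
noncomputable section

/-!
A graded isomorphism `A(α,β) ≃ A(α',β')` acts on degree one through an invertible matrix `M`, and
it must carry the quadratic relations of `A(α,β)` into those of `A(α',β')`. To read off relations
of degree two, represent `A(α',β')` by 5×5 matrices: for every bilinear form `B` on `ℂ³` vanishing
on its relations, `xᵢ xⱼ` acts as `B i j` times a fixed matrix unit. Three such forms give seven
polynomial equations in the entries of `M`; with `det M ≠ 0` they force `M₂₀ = M₂₁ = 0 ≠ M₂₂` and
then `α'β = αβ'`. Conversely, if `(α',β') = λ(α,β)`, then `y ↦ λy` is a graded isomorphism.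
-/

open Matrix

namespace QuadAlg

variable {f₁ f₂ f₃ g₁ g₂ g₃ : F3}

abbrev lin : (Fin 3 → ℂ) →ₗ[ℂ] F3 := Fintype.linearCombination ℂ (FreeAlgebra.ι ℂ)

lemma ι_eq_lin_single (i : Fin 3) : FreeAlgebra.ι ℂ i = lin (Pi.single i 1) := by simp

abbrev mk (f₁ f₂ f₃ : F3) : F3 →ₐ[ℂ] QuadAlg f₁ f₂ f₃ := RingQuot.mkAlgHom ℂ (rel3 f₁ f₂ f₃)

lemma mk_relators : mk f₁ f₂ f₃ f₁ = 0 ∧ mk f₁ f₂ f₃ f₂ = 0 ∧ mk f₁ f₂ f₃ f₃ = 0 := by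
  refine ⟨?_, ?_, ?_⟩ <;> rw [← map_zero (mk f₁ f₂ f₃)] <;>
    exact RingQuot.mkAlgHom_rel ℂ ⟨by tauto, rfl⟩

def lift {R : Type*} [Semiring R] [Algebra ℂ R] (φ : F3 →ₐ[ℂ] R)
    (h : φ f₁ = 0 ∧ φ f₂ = 0 ∧ φ f₃ = 0) : QuadAlg f₁ f₂ f₃ →ₐ[ℂ] R :=
  RingQuot.liftAlgHom ℂ ⟨φ, by rintro _ _ ⟨h' | h' | h', rfl⟩ <;> simp [h', h]⟩

@[simp]
lemma lift_mk {R : Type*} [Semiring R] [Algebra ℂ R] (φ : F3 →ₐ[ℂ] R)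
    (h : φ f₁ = 0 ∧ φ f₂ = 0 ∧ φ f₃ = 0) (a : F3) : lift φ h (mk f₁ f₂ f₃ a) = φ a :=
  RingQuot.liftAlgHom_mkAlgHom_apply ℂ _ _ _

lemma hom_ext {R : Type*} [Semiring R] [Algebra ℂ R] {φ ψ : QuadAlg f₁ f₂ f₃ →ₐ[ℂ] R}
    (h : ∀ i, φ (mk f₁ f₂ f₃ (FreeAlgebra.ι ℂ i)) = ψ (mk f₁ f₂ f₃ (FreeAlgebra.ι ℂ i))) :
    φ = ψ :=
  RingQuot.ringQuot_ext' ℂ _ _ (FreeAlgebra.hom_ext (funext h))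

lemma genSpan_eq_range :
    genSpan f₁ f₂ f₃ = LinearMap.range ((mk f₁ f₂ f₃).toLinearMap ∘ₗ lin) := by
  rw [LinearMap.range_comp, Fintype.range_linearCombination, Submodule.map_span,
    ← Set.range_comp, genSpan]
  congr 1
  ext a
  simp [Fin.exists_fin_succ, X, Y, Z, eq_comm]

lemma map_mk_lin {φ : QuadAlg f₁ f₂ f₃ →ₐ[ℂ] QuadAlg g₁ g₂ g₃} {M : Matrix (Fin 3) (Fin 3) ℂ}
    (h : ∀ i, φ (mk f₁ f₂ f₃ (FreeAlgebra.ι ℂ i)) = mk g₁ g₂ g₃ (lin (M.col i))) (v : Fin 3 → ℂ) :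
    φ (mk f₁ f₂ f₃ (lin v)) = mk g₁ g₂ g₃ (lin (M *ᵥ v)) := by
  have : φ.toLinearMap ∘ₗ (mk f₁ f₂ f₃).toLinearMap ∘ₗ lin =
      (mk g₁ g₂ g₃).toLinearMap ∘ₗ lin ∘ₗ M.mulVecLin := by
    refine LinearMap.pi_ext' fun i => LinearMap.ext_ring ?_
    simp [h]
  exact LinearMap.congr_fun this v

lemma exists_matrix_of_map_genSpan_le {φ : QuadAlg f₁ f₂ f₃ →ₐ[ℂ] QuadAlg g₁ g₂ g₃}
    (h : Submodule.map φ.toLinearMap (genSpan f₁ f₂ f₃) ≤ genSpan g₁ g₂ g₃) :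
    ∃ M : Matrix (Fin 3) (Fin 3) ℂ,
      ∀ v, φ (mk f₁ f₂ f₃ (lin v)) = mk g₁ g₂ g₃ (lin (M *ᵥ v)) := by
  have hgen (i : Fin 3) : ∃ c, mk g₁ g₂ g₃ (lin c) = φ (mk f₁ f₂ f₃ (FreeAlgebra.ι ℂ i)) := by
    have := h (Submodule.mem_map_of_mem (f := φ.toLinearMap)
      (show mk f₁ f₂ f₃ (lin (Pi.single i 1)) ∈ genSpan f₁ f₂ f₃ from
        genSpan_eq_range ▸ LinearMap.mem_range_self _ _))
    simpa [genSpan_eq_range] using this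
  choose c hc using hgen
  exact ⟨(Matrix.of c)ᵀ, map_mk_lin fun i => (hc i).symm⟩

variable {φ : QuadAlg f₁ f₂ f₃ →ₐ[ℂ] QuadAlg g₁ g₂ g₃} {M : Matrix (Fin 3) (Fin 3) ℂ}

lemma map_genSpan_eq_of_isUnit (h : ∀ v, φ (mk f₁ f₂ f₃ (lin v)) = mk g₁ g₂ g₃ (lin (M *ᵥ v)))
    (hM : IsUnit M) : Submodule.map φ.toLinearMap (genSpan f₁ f₂ f₃) = genSpan g₁ g₂ g₃ := by
  have hcomp : φ.toLinearMap ∘ₗ (mk f₁ f₂ f₃).toLinearMap ∘ₗ lin =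
      ((mk g₁ g₂ g₃).toLinearMap ∘ₗ lin) ∘ₗ M.mulVecLin := LinearMap.ext h
  rw [genSpan_eq_range, genSpan_eq_range, ← LinearMap.range_comp, hcomp,
    LinearMap.range_comp_of_range_eq_top]
  exact LinearMap.range_eq_top.2 (mulVec_surjective_iff_isUnit.2 hM)

lemma isUnit_of_genSpan_le_map (h : ∀ v, φ (mk f₁ f₂ f₃ (lin v)) = mk g₁ g₂ g₃ (lin (M *ᵥ v)))
    (hinj : Function.Injective (mk g₁ g₂ g₃ ∘ lin))
    (hle : genSpan g₁ g₂ g₃ ≤ Submodule.map φ.toLinearMap (genSpan f₁ f₂ f₃)) : IsUnit M := by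
  refine mulVec_surjective_iff_isUnit.1 fun v => ?_
  rw [genSpan_eq_range, genSpan_eq_range] at hle
  obtain ⟨_, ⟨u, rfl⟩, hu⟩ := hle (LinearMap.mem_range_self _ v)
  exact ⟨u, hinj (by simpa [h] using hu)⟩

end QuadAlg

namespace TypeS2

open QuadAlg

abbrev Alg (a b : ℂ) : Type :=
  QuadAlg (Z*X - a • (Y*Z)) (X*Z - b • (Z*Y)) (X*X + (a*b) • (Y*Y))

variable {a b : ℂ} {R S : Type*} [Ring R] [Algebra ℂ R] [Ring S] [Algebra ℂ S]

def Rels (a b : ℂ) (x y z : R) : Prop :=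
  z * x - a • (y * z) = 0 ∧ x * z - b • (z * y) = 0 ∧ x * x + (a * b) • (y * y) = 0

lemma Rels.map {x y z : R} (h : Rels a b x y z) (φ : R →ₐ[ℂ] S) : Rels a b (φ x) (φ y) (φ z) := by
  obtain ⟨h₁, h₂, h₃⟩ := h
  exact ⟨by simpa using congrArg φ h₁, by simpa using congrArg φ h₂, by simpa using congrArg φ h₃⟩

lemma Rels.smul_middle {x y z : R} (c : ℂ) (h : Rels (c * a) (c * b) x y z) :
    Rels a b x (c • y) z := by
  obtain ⟨h₁, h₂, h₃⟩ := h
  refine ⟨?_, ?_, ?_⟩ <;>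
    simp only [smul_mul_assoc, mul_smul_comm, smul_smul] <;>
    [convert h₁ using 3; convert h₂ using 3; convert h₃ using 3] <;> ring

lemma rels_mk : Rels a b (mk _ _ _ (FreeAlgebra.ι ℂ 0) : Alg a b) (mk _ _ _ (FreeAlgebra.ι ℂ 1))
    (mk _ _ _ (FreeAlgebra.ι ℂ 2)) := by
  obtain ⟨h₁, h₂, h₃⟩ := mk_relators (f₁ := Z*X - a • (Y*Z)) (f₂ := X*Z - b • (Z*Y))
    (f₃ := X*X + (a*b) • (Y*Y))
  simp only [map_sub, map_add, map_smul, map_mul] at h₁ h₂ h₃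
  exact ⟨h₁, h₂, h₃⟩

def Alg.lift (x y z : R) (h : Rels a b x y z) : Alg a b →ₐ[ℂ] R :=
  QuadAlg.lift (FreeAlgebra.lift ℂ ![x, y, z]) (by simpa [Rels, X, Y, Z] using h)

@[simp]
lemma Alg.lift_mk_ι (x y z : R) (h : Rels a b x y z) (i : Fin 3) :
    Alg.lift x y z h (mk _ _ _ (FreeAlgebra.ι ℂ i)) = ![x, y, z] i := by
  simp [Alg.lift]

def rescale (l : ℂ) (hl : l ≠ 0) : Alg a b ≃ₐ[ℂ] Alg (l * a) (l * b) :=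
  AlgEquiv.ofAlgHom
    (Alg.lift _ _ _ (rels_mk.smul_middle l))
    (Alg.lift _ _ _
      (Rels.smul_middle l⁻¹ (by rw [inv_mul_cancel_left₀ hl, inv_mul_cancel_left₀ hl]; exact rels_mk)))
    (hom_ext fun i => by fin_cases i <;> simp [hl])
    (hom_ext fun i => by fin_cases i <;> simp [hl])

lemma rescale_mk_lin (l : ℂ) (hl : l ≠ 0) (v : Fin 3 → ℂ) :
    rescale l hl (mk _ _ _ (lin v) : Alg a b) =
      mk _ _ _ (lin (diagonal ![1, l, 1] *ᵥ v)) :=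
  map_mk_lin (φ := (rescale l hl).toAlgHom) (fun i => by fin_cases i <;> simp [rescale]) v

/-- The representation of the truncation `ℂ ⊕ ℂ³ ⊕ ℂ` of the tensor algebra in which `u ⊗ v` acts
as `uᵀ B v`. -/
def probe (B : Matrix (Fin 3) (Fin 3) ℂ) : (Fin 3 → ℂ) →ₗ[ℂ] Matrix (Fin 5) (Fin 5) ℂ where
  toFun v := !![0, (v ᵥ* B) 0, (v ᵥ* B) 1, (v ᵥ* B) 2, 0;
                0, 0, 0, 0, v 0;
                0, 0, 0, 0, v 1;
                0, 0, 0, 0, v 2;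
                0, 0, 0, 0, 0]
  map_add' u v := by ext i j; fin_cases i <;> fin_cases j <;> simp [add_vecMul]
  map_smul' c v := by ext i j; fin_cases i <;> fin_cases j <;> simp [smul_vecMul]

lemma probe_mul (B : Matrix (Fin 3) (Fin 3) ℂ) (u v : Fin 3 → ℂ) :
    probe B u * probe B v = (u ⬝ᵥ B *ᵥ v) • single 0 4 1 := by
  ext i j
  fin_cases i <;> fin_cases j <;>
    simp [probe, mul_apply, Fin.sum_univ_five, vecMul, mulVec, dotProduct, Fin.sum_univ_three]
  ring

lemma rels_probe_iff (B : Matrix (Fin 3) (Fin 3) ℂ) (u v w : Fin 3 → ℂ) :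
    Rels a b (probe B u) (probe B v) (probe B w) ↔
      w ⬝ᵥ B *ᵥ u - a * (v ⬝ᵥ B *ᵥ w) = 0 ∧ u ⬝ᵥ B *ᵥ w - b * (w ⬝ᵥ B *ᵥ v) = 0 ∧
        u ⬝ᵥ B *ᵥ u + a * b * (v ⬝ᵥ B *ᵥ v) = 0 := by
  have hE : single (0 : Fin 5) (4 : Fin 5) (1 : ℂ) ≠ 0 := fun h => by simpa using congr_fun₂ h 0 4
  simp only [Rels, probe_mul, smul_smul, ← sub_smul, ← add_smul, smul_eq_zero, hE, or_false]

def probeHom (B : Matrix (Fin 3) (Fin 3) ℂ)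
    (hB : Rels a b (probe B (Pi.single 0 1)) (probe B (Pi.single 1 1)) (probe B (Pi.single 2 1))) :
    Alg a b →ₐ[ℂ] Matrix (Fin 5) (Fin 5) ℂ :=
  Alg.lift _ _ _ hB

lemma probeHom_mk_lin (B : Matrix (Fin 3) (Fin 3) ℂ)
    (hB : Rels a b (probe B (Pi.single 0 1)) (probe B (Pi.single 1 1)) (probe B (Pi.single 2 1)))
    (v : Fin 3 → ℂ) : probeHom B hB (mk _ _ _ (lin v)) = probe B v := by
  have : (probeHom B hB).toLinearMap ∘ₗ (mk _ _ _).toLinearMap ∘ₗ lin = probe B := by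
    refine LinearMap.pi_ext' fun i => LinearMap.ext_ring ?_
    fin_cases i <;> simp [probeHom]
  exact LinearMap.congr_fun this v

lemma mk_lin_injective (a b : ℂ) : Function.Injective (mk _ _ _ ∘ lin : (Fin 3 → ℂ) → Alg a b) := by
  intro v w h
  have hB : Rels a b (probe 0 (Pi.single 0 1)) (probe 0 (Pi.single 1 1)) (probe 0 (Pi.single 2 1)) :=
    (rels_probe_iff _ _ _ _).2 (by simp)
  have hvw := congrArg (probeHom 0 hB) h
  simp only [Function.comp_apply, probeHom_mk_lin] at hvw
  ext i
  have := congr_fun₂ hvw i.castSucc.succ 4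
  fin_cases i <;> simpa [probe] using this

/-- Dual form of `(M ⊗ M) R(a,b) ⊆ R(a',b')` for the relation spaces `R` of `A(a,b)` and
`A(a',b')`. -/
def MapsRelations (a b a' b' : ℂ) (M : Matrix (Fin 3) (Fin 3) ℂ) : Prop :=
  ∀ B, Rels a' b' (probe B (Pi.single 0 1)) (probe B (Pi.single 1 1)) (probe B (Pi.single 2 1)) →
    Rels a b (probe B (M.col 0)) (probe B (M.col 1)) (probe B (M.col 2))

namespace MapsRelations

variable {a' b' : ℂ} {M : Matrix (Fin 3) (Fin 3) ℂ}

lemma of_algHom {φ : Alg a b →ₐ[ℂ] Alg a' b'}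
    (hφ : ∀ v, φ (mk _ _ _ (lin v)) = mk _ _ _ (lin (M *ᵥ v))) : MapsRelations a b a' b' M :=
  fun B hB => by
    have := rels_mk.map ((probeHom B hB).comp φ)
    simpa only [ι_eq_lin_single, AlgHom.comp_apply, hφ, probeHom_mk_lin, mulVec_single_one] using this

lemma entries (h : MapsRelations a b a' b' M) :
    M 2 2 * M 2 0 - a * (M 2 1 * M 2 2) = 0 ∧
    M 2 0 * M 2 2 - b * (M 2 2 * M 2 1) = 0 ∧
    M 2 0 * M 2 0 + a * b * (M 2 1 * M 2 1) = 0 ∧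
    M 1 2 * M 2 0 + M 2 2 * (a' * M 0 0) - a * (M 1 1 * M 2 2 + M 2 1 * (a' * M 0 2)) = 0 ∧
    M 1 0 * M 2 2 + M 2 0 * (a' * M 0 2) - b * (M 1 2 * M 2 1 + M 2 2 * (a' * M 0 1)) = 0 ∧
    M 0 2 * (b' * M 2 0) + M 2 2 * M 1 0 - a * (M 0 1 * (b' * M 2 2) + M 2 1 * M 1 2) = 0 ∧
    M 0 0 * (b' * M 2 2) + M 2 0 * M 1 2 - b * (M 0 2 * (b' * M 2 1) + M 2 2 * M 1 1) = 0 := by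
  have eqs (B : Matrix (Fin 3) (Fin 3) ℂ)
      (hB : B 2 0 - a' * B 1 2 = 0 ∧ B 0 2 - b' * B 2 1 = 0 ∧ B 0 0 + a' * b' * B 1 1 = 0) :=
    (rels_probe_iff B _ _ _).1 (h B ((rels_probe_iff B _ _ _).2 (by simpa using hB)))
  -- three of the six forms vanishing on `R(a',b')`
  obtain ⟨h₁, h₂, h₃⟩ := eqs !![0, 0, 0; 0, 0, 0; 0, 0, 1] (by simp)
  obtain ⟨h₄, h₅, -⟩ := eqs !![0, 0, 0; 0, 0, 1; a', 0, 0] (by simp)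
  obtain ⟨h₆, h₇, -⟩ := eqs !![0, 0, b'; 0, 0, 0; 0, 1, 0] (by simp)
  simp only [dotProduct, mulVec, Fin.sum_univ_three, col_apply, of_apply, cons_val', cons_val_fin_one,
    cons_val_zero, cons_val_one, cons_val, zero_mul, add_zero, mul_zero, one_mul, zero_add]
    at h₁ h₂ h₃ h₄ h₅ h₆ h₇
  exact ⟨h₁, h₂, h₃, h₄, h₅, h₆, h₇⟩

lemma apply_two_two_ne_zero (h : MapsRelations a b a' b' M) (hab : a * b ≠ 0) (ha' : a' ≠ 0)
    (hM : M.det ≠ 0) : M 2 2 ≠ 0 := by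
  obtain ⟨-, -, h₃, h₄, h₅, -, -⟩ := h.entries
  intro hw₂
  apply hM
  rw [hw₂] at h₄ h₅
  by_cases hu₂ : M 2 0 = 0
  · have hv₂ : M 2 1 = 0 := by
      rw [hu₂] at h₃
      simpa [hab] using h₃
    exact det_eq_zero_of_row_eq_zero 2 fun j => by fin_cases j <;> assumption
  · have hw₀ : M 0 2 = 0 := by
      have : 2 * a' * M 2 0 ^ 2 * M 0 2 = 0 := by
        linear_combination b * M 2 1 * h₄ + M 2 0 * h₅ + a' * M 0 2 * h₃
      simpa [ha', hu₂] using this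
    have hw₁ : M 1 2 = 0 := by
      rw [hw₀] at h₄
      simpa [hu₂] using h₄
    exact det_eq_zero_of_column_eq_zero 2 fun i => by fin_cases i <;> assumption

lemma mul_eq_mul (h : MapsRelations a b a' b' M) (hab : a * b ≠ 0) (ha' : a' ≠ 0)
    (hM : M.det ≠ 0) : a' * b = a * b' := by
  have hw₂ := h.apply_two_two_ne_zero hab ha' hM
  obtain ⟨h₁, h₂, h₃, h₄, h₅, h₆, h₇⟩ := h.entries
  have hua : M 2 0 = a * M 2 1 := by
    linear_combination (mul_eq_zero.1 (show M 2 2 * (M 2 0 - a * M 2 1) = 0 by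
      linear_combination h₁)).resolve_left hw₂
  have hub : M 2 0 = b * M 2 1 := by
    linear_combination (mul_eq_zero.1 (show M 2 2 * (M 2 0 - b * M 2 1) = 0 by
      linear_combination h₂)).resolve_left hw₂
  have hv₂ : M 2 1 = 0 := by
    have : 2 * (a * b) * M 2 1 ^ 2 = 0 := by
      linear_combination h₃ - M 2 0 * hua - a * M 2 1 * hub
    simpa [hab] using this
  have hu₂ : M 2 0 = 0 := by rw [hua, hv₂, mul_zero]
  rw [hu₂, hv₂] at h₄ h₅ h₆ h₇
  have : (a' * b - a * b') * M.det = 0 := by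
    -- now `det M = M₂₂ (M₀₀ M₁₁ - M₀₁ M₁₀)`
    rw [det_fin_three, hu₂, hv₂]
    linear_combination M 1 1 * (b * h₄ - a * h₇) - M 1 0 * (h₆ - h₅)
  exact sub_eq_zero.1 ((mul_eq_zero.1 this).resolve_right hM)

end MapsRelations

end TypeS2

theorem typeS2_iso_iff
    (α β α' β' : ℂ)
    (h : α * β ≠ 0)
    (h' : α' * β' ≠ 0)
    : GrIso
      (Z*X - α • (Y*Z))
      (X*Z - β • (Z*Y))
      (X*X + (α*β) • (Y*Y))
      (Z*X - α' • (Y*Z))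
      (X*Z - β' • (Z*Y))
      (X*X + (α'*β') • (Y*Y))
      ↔
      (∃ l : ℂ, l ≠ 0 ∧ α' = l*α ∧ β' = l*β) := by
  constructor
  · rintro ⟨e, he⟩
    obtain ⟨M, hM⟩ := QuadAlg.exists_matrix_of_map_genSpan_le (φ := e.toAlgHom) he.le
    have hdet : M.det ≠ 0 :=
      ((Matrix.isUnit_iff_isUnit_det M).1 <|
        QuadAlg.isUnit_of_genSpan_le_map hM (TypeS2.mk_lin_injective α' β') he.ge).ne_zero
    have hα : α ≠ 0 := left_ne_zero_of_mul h
    have hα' : α' ≠ 0 := left_ne_zero_of_mul h'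
    have key := (TypeS2.MapsRelations.of_algHom hM).mul_eq_mul h hα' hdet
    refine ⟨α' / α, div_ne_zero hα' hα, by field_simp, ?_⟩
    field_simp
    linear_combination -key
  · rintro ⟨l, hl, rfl, rfl⟩
    refine ⟨TypeS2.rescale l hl, QuadAlg.map_genSpan_eq_of_isUnit (TypeS2.rescale_mk_lin l hl) ?_⟩
    simp [Matrix.isUnit_iff_isUnit_det, Fin.prod_univ_three, hl]
end
end

section
/- (Type S₃) For α, β, γ ∈ ℂ with αβγ ≠ 0 and αβγ ≠ 1, let A(α,β,γ) = ℂ⟨x,y,z⟩/(yx − αz², zy − βx², xz − γy²). For α', β', γ' ∈ ℂ with α'β'γ' ≠ 0 and α'β'γ' ≠ 1, the algebras A(α,β,γ) and A(α',β',γ') are isomorphic as graded algebras if and only if α'β'γ' = αβγ. -/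
noncomputable section

/-!
A graded isomorphism `A(κ) ≃ A(κ')` acts on the generators by an invertible matrix `G`.
A pair of vectors `(p, q)` at which all relations vanish, read as bilinear forms, is the same
thing as an algebra map sending `xᵢ ↦ pᵢ E₀₁ + qᵢ E₁₂` into `3 × 3` matrices; composing with the
isomorphism, `G` carries such pairs of `A(κ')` to such pairs of `A(κ)`. When `∏ κ ≠ 1`, the first
vector of a pair with `q ≠ 0` lies on the coordinate triangle `xyz = 0`. Every coordinate line of
`A(κ')` consists of first vectors of pairs, so `G` permutes the coordinate lines; the vertices
`(eⱼ, eⱼ₊₁)` are pairs, which forces the permutation to be a rotation `j ↦ j + r`. Writing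
`G eⱼ = δⱼ eⱼ₊ᵣ`, the pair on a coordinate line at parameter `1` gives
`δⱼ δⱼ₊₂ κ'ⱼ₊₁ = κⱼ₊₁₊ᵣ δⱼ₊₁²`, and the product over `j` is `∏ κ' = ∏ κ`.
Conversely, when `∏ κ' = ∏ κ` a diagonal rescaling of the generators (which needs a cube root)
is a graded isomorphism.
-/

open Matrix

namespace TypeS3

section Algebra

variable (κ : Fin 3 → ℂ)

/-- With `x₀ = x, x₁ = y, x₂ = z` the relations read `x_{k+2} x_{k+1} = κ k • x_k²`,
so that `A(α, β, γ)` is `S3Alg ![β, γ, α]`. -/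
abbrev S3Alg : Type := QuadAlg (Y*X - κ 2 • (Z*Z)) (Z*Y - κ 0 • (X*X)) (X*Z - κ 1 • (Y*Y))

def gen (i : Fin 3) : S3Alg κ := RingQuot.mkAlgHom ℂ _ (FreeAlgebra.ι ℂ i)

lemma gen_relation (k : Fin 3) : gen κ (k + 2) * gen κ (k + 1) = κ k • (gen κ k * gen κ k) := by
  have hrel : ∀ f, f = Y*X - κ 2 • (Z*Z) ∨ f = Z*Y - κ 0 • (X*X) ∨ f = X*Z - κ 1 • (Y*Y) →
      RingQuot.mkAlgHom ℂ _ f = (0 : S3Alg κ) := fun f hf => by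
    simpa using RingQuot.mkAlgHom_rel ℂ (s := rel3 _ _ _) (x := f) (y := 0) ⟨hf, rfl⟩
  have h₁ := hrel _ (Or.inl rfl)
  have h₂ := hrel _ (Or.inr (Or.inl rfl))
  have h₃ := hrel _ (Or.inr (Or.inr rfl))
  rw [map_sub, map_smul, map_mul, map_mul, sub_eq_zero] at h₁ h₂ h₃
  fin_cases k
  exacts [h₂, h₃, h₁]

lemma genSpan_eq :
    genSpan (Y*X - κ 2 • (Z*Z)) (Z*Y - κ 0 • (X*X)) (X*Z - κ 1 • (Y*Y))
      = Submodule.span ℂ (Set.range (gen κ)) := by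
  rw [genSpan]
  congr 1
  ext a
  constructor
  · rintro (rfl | rfl | rfl)
    exacts [⟨0, rfl⟩, ⟨1, rfl⟩, ⟨2, rfl⟩]
  · rintro ⟨i, rfl⟩
    fin_cases i
    exacts [Or.inl rfl, Or.inr (Or.inl rfl), Or.inr (Or.inr rfl)]

variable {B : Type*} [Ring B] [Algebra ℂ B]

def lift (v : Fin 3 → B) (hv : ∀ k, v (k + 2) * v (k + 1) = κ k • (v k * v k)) :
    S3Alg κ →ₐ[ℂ] B :=
  RingQuot.liftAlgHom ℂ ⟨FreeAlgebra.lift ℂ v, by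
    rintro _ _ ⟨rfl | rfl | rfl, rfl⟩ <;> simp [X, Y, Z, sub_eq_zero]
    exacts [hv 2, hv 0, hv 1]⟩

@[simp]
lemma lift_gen (v : Fin 3 → B) (hv : ∀ k, v (k + 2) * v (k + 1) = κ k • (v k * v k))
    (i : Fin 3) : lift κ v hv (gen κ i) = v i := by
  simp [lift, gen]

variable {κ} in
lemma hom_ext {f g : S3Alg κ →ₐ[ℂ] B} (h : ∀ i, f (gen κ i) = g (gen κ i)) : f = g :=
  RingQuot.ringQuot_ext' ℂ f g (FreeAlgebra.hom_ext (funext h))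

end Algebra

/-- `(p, q)` is a zero of all relations of `S3Alg κ`, read as bilinear forms
(an affine point of the point scheme `Γ ⊆ ℙ² × ℙ²`). -/
def IsPointPair (κ p q : Fin 3 → ℂ) : Prop :=
  ∀ k, p (k + 2) * q (k + 1) = κ k * (p k * q k)

section PointPair

variable {κ κ' : Fin 3 → ℂ}

def pointMat (p q : Fin 3 → ℂ) (i : Fin 3) : Matrix (Fin 3) (Fin 3) ℂ :=
  !![0, p i, 0; 0, 0, q i; 0, 0, 0]

lemma pointMat_relation_iff {p q : Fin 3 → ℂ} :
    (∀ k, pointMat p q (k + 2) * pointMat p q (k + 1) = κ k • (pointMat p q k * pointMat p q k))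
      ↔ IsPointPair κ p q :=
  forall_congr' fun k => by simp [pointMat]

def pointHom {p q : Fin 3 → ℂ} (h : IsPointPair κ p q) :
    S3Alg κ →ₐ[ℂ] Matrix (Fin 3) (Fin 3) ℂ :=
  lift κ (pointMat p q) (pointMat_relation_iff.mpr h)

lemma IsPointPair.of_algHom {p q : Fin 3 → ℂ} (φ : S3Alg κ →ₐ[ℂ] Matrix (Fin 3) (Fin 3) ℂ)
    (hφ : ∀ i, φ (gen κ i) = pointMat p q i) : IsPointPair κ p q :=
  pointMat_relation_iff.mp fun k => by simpa [hφ] using congrArg φ (gen_relation κ k)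

variable (κ) in
lemma gen_linearIndependent : LinearIndependent ℂ (gen κ) := by
  refine Fintype.linearIndependent_iff.mpr fun w hw i => ?_
  have hpair : IsPointPair κ (Pi.single i 1) 0 := fun k => by simp
  simpa [pointHom, pointMat, Pi.single_apply, Matrix.sum_apply] using
    congrArg (fun a => pointHom hpair a 0 1) hw

lemma IsPointPair.mulVec (e : S3Alg κ →ₐ[ℂ] S3Alg κ') (G : Matrix (Fin 3) (Fin 3) ℂ)
    (hG : ∀ i, e (gen κ i) = ∑ j, G i j • gen κ' j) {p q : Fin 3 → ℂ}
    (h : IsPointPair κ' p q) : IsPointPair κ (G *ᵥ p) (G *ᵥ q) :=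
  IsPointPair.of_algHom ((pointHom h).comp e) fun i => by
    ext a b
    fin_cases a <;> fin_cases b <;>
      simp [hG, pointHom, pointMat, Matrix.sum_apply, Matrix.mulVec, dotProduct]

lemma exists_det_ne_zero_of_mem_span (e : S3Alg κ →ₐ[ℂ] S3Alg κ') (he : Function.Injective e)
    (hspan : ∀ i, e (gen κ i) ∈ Submodule.span ℂ (Set.range (gen κ'))) :
    ∃ G : Matrix (Fin 3) (Fin 3) ℂ, G.det ≠ 0 ∧ ∀ i, e (gen κ i) = ∑ j, G i j • gen κ' j := by
  choose G hG using fun i => (Submodule.mem_span_range_iff_exists_fun ℂ).mp (hspan i)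
  refine ⟨Matrix.of G, fun hdet => ?_, fun i => (hG i).symm⟩
  obtain ⟨w, hw, hwG⟩ := Matrix.exists_vecMul_eq_zero_iff.mpr hdet
  have hcol : ∀ j, ∑ i, w i * G i j = 0 := fun j => by
    simpa [vecMul, dotProduct] using congrFun hwG j
  have hker : e (∑ i, w i • gen κ i) = e 0 := by
    simp only [map_sum, map_smul, ← hG, Finset.smul_sum, smul_smul, map_zero]
    rw [Finset.sum_comm]
    simp [← Finset.sum_smul, hcol]
  exact hw (funext (Fintype.linearIndependent_iff.mp (gen_linearIndependent κ) w (he hker)))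

lemma IsPointPair.prod_eq_zero {p q : Fin 3 → ℂ} (h : IsPointPair κ p q) (hκ : ∏ k, κ k ≠ 1)
    (hq : q ≠ 0) : ∏ i, p i = 0 := by
  have h0 := h 0
  have h1 := h 1
  have h2 := h 2
  simp only [Fin.isValue, Fin.reduceAdd] at h0 h1 h2
  -- `(1 - ∏ κ) ∏ p` is the determinant of the linear system that `h` imposes on `q`
  have hdet : ∀ m, (1 - ∏ k, κ k) * (∏ i, p i) * q m = 0 := by
    intro m
    simp only [Fin.prod_univ_three]
    fin_cases m <;> simp only [Fin.reduceFinMk, Fin.isValue]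
    · linear_combination p 0 * p 2 * h2 + κ 2 * p 2 ^ 2 * h1 + κ 1 * κ 2 * p 1 * p 2 * h0
    · linear_combination p 1 * p 0 * h0 + κ 0 * p 0 ^ 2 * h2 + κ 2 * κ 0 * p 2 * p 0 * h1
    · linear_combination p 2 * p 1 * h1 + κ 1 * p 1 ^ 2 * h0 + κ 0 * κ 1 * p 0 * p 1 * h2
  by_contra hp
  exact hq (funext fun m => by simpa [sub_eq_zero, Ne.symm hκ, hp] using hdet m)

lemma IsPointPair.eq_add_one_of_single (hκ : ∀ k, κ k ≠ 0) {a b : Fin 3} {x y : ℂ}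
    (hx : x ≠ 0) (hy : y ≠ 0) (h : IsPointPair κ (Pi.single a x) (Pi.single b y)) :
    b = a + 1 := by
  have ha := h a
  have ha' := h (a + 1)
  fin_cases a <;> fin_cases b <;> simp_all

lemma isPointPair_line (κ : Fin 3 → ℂ) (j : Fin 3) (t : ℂ) :
    IsPointPair κ (Pi.single j 1 + Pi.single (j + 1) t)
      (Pi.single (j + 1) 1 + Pi.single (j + 2) (t * κ (j + 1))) := by
  intro k
  fin_cases j <;> fin_cases k <;> simp <;> ring

end PointPair

lemma exists_eq_zero_of_forall_prod_eq_zero {ι K : Type*} [Fintype ι] [Field K] [Infinite K]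
    {a b : ι → K} (h : ∀ t, ∏ i, (a i + b i * t) = 0) : ∃ i, a i = 0 ∧ b i = 0 := by
  have hP : ∏ i, (Polynomial.C (a i) + Polynomial.C (b i) * Polynomial.X) = 0 :=
    Polynomial.funext fun t => by simpa [Polynomial.eval_prod] using h t
  obtain ⟨i, -, hi⟩ := Finset.prod_eq_zero_iff.mp hP
  exact ⟨i, by simpa using congrArg (Polynomial.coeff · 0) hi,
    by simpa using congrArg (Polynomial.coeff · 1) hi⟩

lemma prod_comp_add_right {A M : Type*} [AddGroup A] [Fintype A] [CommMonoid M] (f : A → M)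
    (c : A) : ∏ a, f (a + c) = ∏ a, f a :=
  Fintype.prod_equiv (Equiv.addRight c) _ _ fun _ => rfl

section Monomial

variable {κ κ' : Fin 3 → ℂ} {G : Matrix (Fin 3) (Fin 3) ℂ}

lemma exists_row_eq_zero (hκ1 : ∏ k, κ k ≠ 1) (hG : G.det ≠ 0)
    (hmap : ∀ p q, IsPointPair κ' p q → IsPointPair κ (G *ᵥ p) (G *ᵥ q)) (j : Fin 3) :
    ∃ i, G i j = 0 ∧ G i (j + 1) = 0 := by
  refine exists_eq_zero_of_forall_prod_eq_zero fun t => ?_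
  have hq : (Pi.single (j + 1) 1 + Pi.single (j + 2) (t * κ' (j + 1)) : Fin 3 → ℂ) ≠ 0 := by
    intro h
    have := congrFun h (j + 1)
    fin_cases j <;> simp at this
  have hGq : G *ᵥ (Pi.single (j + 1) 1 + Pi.single (j + 2) (t * κ' (j + 1))) ≠ 0 :=
    fun h => hG (Matrix.exists_mulVec_eq_zero_iff.mp ⟨_, hq, h⟩)
  simpa [Matrix.mulVec_add, Matrix.mulVec_single, mul_comm t] using
    (hmap _ _ (isPointPair_line κ' j t)).prod_eq_zero hκ1 hGq

lemma exists_col_eq_single (hκ : ∀ k, κ k ≠ 0) (hκ1 : ∏ k, κ k ≠ 1) (hG : G.det ≠ 0)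
    (hmap : ∀ p q, IsPointPair κ' p q → IsPointPair κ (G *ᵥ p) (G *ᵥ q)) :
    ∃ r : Fin 3, ∃ δ : Fin 3 → ℂ, (∀ m, δ m ≠ 0) ∧ ∀ m, G.col m = Pi.single (m + r) (δ m) := by
  choose f hf using exists_row_eq_zero hκ1 hG hmap
  have hinj : f.Injective := by
    intro j j' hjj'
    by_contra hne
    refine hG (Matrix.det_eq_zero_of_row_eq_zero (f j) fun k => ?_)
    have hcover : ∀ a b c : Fin 3, a ≠ b → c = a ∨ c = a + 1 ∨ c = b ∨ c = b + 1 := by decide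
    rcases hcover j j' k hne with rfl | rfl | rfl | rfl
    exacts [(hf k).1, (hf j).2, hjj' ▸ (hf k).1, hjj' ▸ (hf j').2]
  have hcol : ∀ m, G.col m = Pi.single (f (m + 1)) (G (f (m + 1)) m) := by
    intro m
    funext i
    obtain ⟨k, rfl⟩ := Finite.injective_iff_surjective.mp hinj i
    by_cases hk : k = m + 1
    · simp [hk]
    · have hm : ∀ a b : Fin 3, a ≠ b + 1 → b = a ∨ b = a + 1 := by decide
      rw [Pi.single_apply, if_neg (hinj.ne hk), Matrix.col_apply]
      rcases hm k m hk with rfl | rfl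
      exacts [(hf m).1, (hf k).2]
  have hδ : ∀ m, G (f (m + 1)) m ≠ 0 := fun m h =>
    hG (Matrix.det_eq_zero_of_column_eq_zero m fun i => by simpa [h] using congrFun (hcol m) i)
  have hrot : ∀ m, f (m + 2) = f (m + 1) + 1 := fun m => by
    have h := hmap _ _ (isPointPair_line κ' m 0)
    simp only [Pi.single_zero, add_zero, zero_mul, Matrix.mulVec_single_one, hcol] at h
    simpa [add_assoc] using h.eq_add_one_of_single hκ (hδ m) (hδ (m + 1))
  refine ⟨f 1, fun m => G (f (m + 1)) m, hδ, fun m => ?_⟩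
  have h0 := hrot 0
  have h1 := hrot 1
  have hf' : f (m + 1) = m + f 1 := by
    fin_cases m <;> simp at h0 h1 ⊢ <;> grind
  dsimp only
  rw [hcol, hf']

theorem prod_eq_of_isPointPair_mulVec (hκ : ∀ k, κ k ≠ 0) (hκ1 : ∏ k, κ k ≠ 1)
    (hG : G.det ≠ 0) (hmap : ∀ p q, IsPointPair κ' p q → IsPointPair κ (G *ᵥ p) (G *ᵥ q)) :
    ∏ k, κ' k = ∏ k, κ k := by
  obtain ⟨r, δ, hδ, hcol⟩ := exists_col_eq_single hκ hκ1 hG hmap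
  have hline : ∀ j, δ j * δ (j + 2) * κ' (j + 1) = κ (j + (1 + r)) * δ (j + 1) ^ 2 := by
    intro j
    have h := hmap _ _ (isPointPair_line κ' j 1) (j + (1 + r))
    simp only [Matrix.mulVec_add, Matrix.mulVec_single, hcol] at h
    fin_cases j <;> fin_cases r <;> simp at h ⊢ <;> linear_combination h
  have hprod := Fintype.prod_congr _ _ hline
  simp only [Finset.prod_mul_distrib, Finset.prod_pow, prod_comp_add_right] at hprod
  have hδ' : (∏ j, δ j) ^ 2 ≠ 0 := pow_ne_zero 2 (Finset.prod_ne_zero_iff.mpr fun j _ => hδ j)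
  exact mul_left_cancel₀ hδ' (by linear_combination hprod)

end Monomial

theorem prod_eq_of_grIso {κ κ' : Fin 3 → ℂ} (hκ : ∀ k, κ k ≠ 0) (hκ1 : ∏ k, κ k ≠ 1)
    (h : GrIso (Y*X - κ 2 • (Z*Z)) (Z*Y - κ 0 • (X*X)) (X*Z - κ 1 • (Y*Y))
      (Y*X - κ' 2 • (Z*Z)) (Z*Y - κ' 0 • (X*X)) (X*Z - κ' 1 • (Y*Y))) :
    ∏ k, κ' k = ∏ k, κ k := by
  obtain ⟨e, he⟩ := h
  rw [genSpan_eq, genSpan_eq] at he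
  obtain ⟨G, hdet, hG⟩ := exists_det_ne_zero_of_mem_span e.toAlgHom e.injective fun i =>
    he ▸ Submodule.mem_map_of_mem (Submodule.subset_span ⟨i, rfl⟩)
  exact prod_eq_of_isPointPair_mulVec hκ hκ1 hdet fun p q => IsPointPair.mulVec _ G hG

section Scaling

variable {κ κ' s : Fin 3 → ℂ}

def scaleHom (hs : ∀ k, s (k + 2) * s (k + 1) * κ' k = κ k * s k ^ 2) :
    S3Alg κ →ₐ[ℂ] S3Alg κ' :=
  lift κ (fun i => s i • gen κ' i) fun k => by
    rw [smul_mul_smul_comm, smul_mul_smul_comm, gen_relation, smul_smul, smul_smul, hs, sq]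

@[simp]
lemma scaleHom_gen (hs : ∀ k, s (k + 2) * s (k + 1) * κ' k = κ k * s k ^ 2) (i : Fin 3) :
    scaleHom hs (gen κ i) = s i • gen κ' i :=
  lift_gen ..

lemma grIso_of_scaling (hs : ∀ k, s (k + 2) * s (k + 1) * κ' k = κ k * s k ^ 2)
    (hs0 : ∀ k, s k ≠ 0) :
    GrIso (Y*X - κ 2 • (Z*Z)) (Z*Y - κ 0 • (X*X)) (X*Z - κ 1 • (Y*Y))
      (Y*X - κ' 2 • (Z*Z)) (Z*Y - κ' 0 • (X*X)) (X*Z - κ' 1 • (Y*Y)) := by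
  have hs' : ∀ k, s⁻¹ (k + 2) * s⁻¹ (k + 1) * κ k = κ' k * s⁻¹ k ^ 2 := fun k => by
    simp only [Pi.inv_apply]
    field_simp [hs0]
    linear_combination -hs k
  let e := AlgEquiv.ofAlgHom (scaleHom hs) (scaleHom hs')
    (hom_ext fun i => by simp [smul_smul, hs0])
    (hom_ext fun i => by simp [smul_smul, hs0])
  refine ⟨e, ?_⟩
  rw [genSpan_eq, genSpan_eq, Submodule.map_span, ← Set.range_comp,
    Submodule.span_range_eq_iSup, Submodule.span_range_eq_iSup]
  refine iSup_congr fun i => ?_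
  rw [Function.comp_apply, AlgEquiv.toLinearMap_apply, AlgEquiv.ofAlgHom_apply, scaleHom_gen]
  exact Submodule.span_singleton_smul_eq (hs0 i).isUnit _

lemma exists_scaling (hκ : ∀ k, κ k ≠ 0) (h : ∏ k, κ' k = ∏ k, κ k) :
    ∃ s : Fin 3 → ℂ, (∀ k, s k ≠ 0) ∧ ∀ k, s (k + 2) * s (k + 1) * κ' k = κ k * s k ^ 2 := by
  have hκ' : ∀ k, κ' k ≠ 0 := fun k hk =>
    Finset.prod_ne_zero_iff.mpr (fun k _ => hκ k) (h ▸ Finset.prod_eq_zero (Finset.mem_univ k) hk)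
  obtain ⟨t, ht⟩ := IsAlgClosed.exists_pow_nat_eq (κ 0 * κ' 1 / (κ 1 * κ' 0)) three_pos
  have ht0 : t ≠ 0 := by
    rintro rfl
    refine div_ne_zero (mul_ne_zero (hκ 0) (hκ' 1)) (mul_ne_zero (hκ 1) (hκ' 0)) ?_
    simpa using ht.symm
  rw [Fin.prod_univ_three, Fin.prod_univ_three] at h
  -- the `k = 1` equation defines `s 2`; the choice of `t` gives `k = 0`, and then `h` gives `k = 2`
  refine ⟨![1, t, κ 1 * t ^ 2 / κ' 1], fun k => ?_, fun k => ?_⟩ <;> fin_cases k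
  all_goals simp [ht0, hκ, hκ']
  all_goals field_simp [hκ' 0, hκ' 1]; rw [ht]; field_simp [hκ 1, hκ' 0]
  linear_combination κ' 1 * h

end Scaling

end TypeS3

theorem typeS3_iso_iff_general
    (α β γ α' β' γ' : ℂ)
    (h0 : α * β * γ ≠ 0)
    (h1 : α * β * γ ≠ 1)
    : GrIso
      (Y*X - α • (Z*Z))
      (Z*Y - β • (X*X))
      (X*Z - γ • (Y*Y))
      (Y*X - α' • (Z*Z))
      (Z*Y - β' • (X*X))
      (X*Z - γ' • (Y*Y))
      ↔
      (α' * β' * γ' = α * β * γ) := by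
  have hprod : ∀ a b c : ℂ, ∏ k, ![b, c, a] k = a * b * c := fun a b c => by
    simp [Fin.prod_univ_three]
    ring
  have hκ : ∀ k, ![β, γ, α] k ≠ 0 := by
    simp only [ne_eq, mul_eq_zero, not_or] at h0
    intro k
    fin_cases k <;> simp [h0]
  constructor
  · intro h
    rw [← hprod, ← hprod]
    exact TypeS3.prod_eq_of_grIso (κ := ![β, γ, α]) (κ' := ![β', γ', α']) hκ
      (by rwa [hprod]) h
  · intro h
    obtain ⟨s, hs0, hs⟩ := TypeS3.exists_scaling (κ' := ![β', γ', α']) hκ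
      (by rw [hprod, hprod, h])
    exact TypeS3.grIso_of_scaling (κ := ![β, γ, α]) (κ' := ![β', γ', α']) hs hs0

theorem typeS3_iso_iff
    (α β γ α' β' γ' : ℂ)
    (h0 : α * β * γ ≠ 0)
    (h1 : α * β * γ ≠ 1)
    (h0' : α' * β' * γ' ≠ 0)
    (h1' : α' * β' * γ' ≠ 1)
    : GrIso
      (Y*X - α • (Z*Z))
      (Z*Y - β • (X*X))
      (X*Z - γ • (Y*Y))
      (Y*X - α' • (Z*Z))
      (Z*Y - β' • (X*X))
      (X*Z - γ' • (Y*Y))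
      ↔
      (α' * β' * γ' = α * β * γ) :=
  typeS3_iso_iff_general α β γ α' β' γ' h0 h1
end
end

section
/- (Type S′₁) For α, β ∈ ℂ with αβ² ≠ 0 and αβ² ≠ 1, let A(α,β) = ℂ⟨x,y,z⟩/(xy − βyx, x² + yz − αzy, zx − βxz). For α', β' ∈ ℂ with α'β'² ≠ 0 and α'β'² ≠ 1, the algebras A(α,β) and A(α',β') are isomorphic as graded algebras if and only if (α',β') = (α,β) or (α',β') = (α⁻¹,β⁻¹). -/
noncomputable section

/-- Truncated quadratic algebra model: ℂ ⊕ V ⊕ W with V·V → W given by the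
reduced multiplication table of the type S'₁ algebra. -/
structure TB (α β : ℂ) where
  s : ℂ
  x : ℂ
  y : ℂ
  z : ℂ
  m1 : ℂ
  m2 : ℂ
  m3 : ℂ
  m4 : ℂ
  m5 : ℂ
  m6 : ℂ

namespace TB

variable {α β : ℂ}

@[ext] theorem ext {A C : TB α β} (h1 : A.s = C.s) (h2 : A.x = C.x) (h3 : A.y = C.y)
    (h4 : A.z = C.z) (h5 : A.m1 = C.m1) (h6 : A.m2 = C.m2) (h7 : A.m3 = C.m3)
    (h8 : A.m4 = C.m4) (h9 : A.m5 = C.m5) (h10 : A.m6 = C.m6) : A = C := by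
  cases A; cases C; simp_all

instance : Add (TB α β) :=
  ⟨fun A C => ⟨A.s + C.s, A.x + C.x, A.y + C.y, A.z + C.z, A.m1 + C.m1, A.m2 + C.m2,
    A.m3 + C.m3, A.m4 + C.m4, A.m5 + C.m5, A.m6 + C.m6⟩⟩
instance : Neg (TB α β) :=
  ⟨fun A => ⟨-A.s, -A.x, -A.y, -A.z, -A.m1, -A.m2, -A.m3, -A.m4, -A.m5, -A.m6⟩⟩
instance : Zero (TB α β) := ⟨⟨0,0,0,0,0,0,0,0,0,0⟩⟩
instance : One (TB α β) := ⟨⟨1,0,0,0,0,0,0,0,0,0⟩⟩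
instance : SMul ℂ (TB α β) :=
  ⟨fun r A => ⟨r*A.s, r*A.x, r*A.y, r*A.z, r*A.m1, r*A.m2, r*A.m3, r*A.m4, r*A.m5, r*A.m6⟩⟩
instance : Mul (TB α β) :=
  ⟨fun A C => ⟨A.s * C.s,
    A.s * C.x + A.x * C.s,
    A.s * C.y + A.y * C.s,
    A.s * C.z + A.z * C.s,
    A.s * C.m1 + A.m1 * C.s + A.x * C.x + α⁻¹ * (A.z * C.y),
    A.s * C.m2 + A.m2 * C.s + A.x * C.y + β⁻¹ * (A.y * C.x),
    A.s * C.m3 + A.m3 * C.s + A.x * C.z + β * (A.z * C.x),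
    A.s * C.m4 + A.m4 * C.s + A.y * C.y,
    A.s * C.m5 + A.m5 * C.s + A.y * C.z + α⁻¹ * (A.z * C.y),
    A.s * C.m6 + A.m6 * C.s + A.z * C.z⟩⟩

@[simp] lemma add_s (A C : TB α β) : (A + C).s = A.s + C.s := rfl
@[simp] lemma add_x (A C : TB α β) : (A + C).x = A.x + C.x := rfl
@[simp] lemma add_y (A C : TB α β) : (A + C).y = A.y + C.y := rfl
@[simp] lemma add_z (A C : TB α β) : (A + C).z = A.z + C.z := rfl
@[simp] lemma add_m1 (A C : TB α β) : (A + C).m1 = A.m1 + C.m1 := rfl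
@[simp] lemma add_m2 (A C : TB α β) : (A + C).m2 = A.m2 + C.m2 := rfl
@[simp] lemma add_m3 (A C : TB α β) : (A + C).m3 = A.m3 + C.m3 := rfl
@[simp] lemma add_m4 (A C : TB α β) : (A + C).m4 = A.m4 + C.m4 := rfl
@[simp] lemma add_m5 (A C : TB α β) : (A + C).m5 = A.m5 + C.m5 := rfl
@[simp] lemma add_m6 (A C : TB α β) : (A + C).m6 = A.m6 + C.m6 := rfl
@[simp] lemma neg_s (A : TB α β) : (-A).s = -A.s := rfl
@[simp] lemma neg_x (A : TB α β) : (-A).x = -A.x := rfl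
@[simp] lemma neg_y (A : TB α β) : (-A).y = -A.y := rfl
@[simp] lemma neg_z (A : TB α β) : (-A).z = -A.z := rfl
@[simp] lemma neg_m1 (A : TB α β) : (-A).m1 = -A.m1 := rfl
@[simp] lemma neg_m2 (A : TB α β) : (-A).m2 = -A.m2 := rfl
@[simp] lemma neg_m3 (A : TB α β) : (-A).m3 = -A.m3 := rfl
@[simp] lemma neg_m4 (A : TB α β) : (-A).m4 = -A.m4 := rfl
@[simp] lemma neg_m5 (A : TB α β) : (-A).m5 = -A.m5 := rfl
@[simp] lemma neg_m6 (A : TB α β) : (-A).m6 = -A.m6 := rfl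
@[simp] lemma zero_s : (0 : TB α β).s = 0 := rfl
@[simp] lemma zero_x : (0 : TB α β).x = 0 := rfl
@[simp] lemma zero_y : (0 : TB α β).y = 0 := rfl
@[simp] lemma zero_z : (0 : TB α β).z = 0 := rfl
@[simp] lemma zero_m1 : (0 : TB α β).m1 = 0 := rfl
@[simp] lemma zero_m2 : (0 : TB α β).m2 = 0 := rfl
@[simp] lemma zero_m3 : (0 : TB α β).m3 = 0 := rfl
@[simp] lemma zero_m4 : (0 : TB α β).m4 = 0 := rfl
@[simp] lemma zero_m5 : (0 : TB α β).m5 = 0 := rfl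
@[simp] lemma zero_m6 : (0 : TB α β).m6 = 0 := rfl
@[simp] lemma one_s : (1 : TB α β).s = 1 := rfl
@[simp] lemma one_x : (1 : TB α β).x = 0 := rfl
@[simp] lemma one_y : (1 : TB α β).y = 0 := rfl
@[simp] lemma one_z : (1 : TB α β).z = 0 := rfl
@[simp] lemma one_m1 : (1 : TB α β).m1 = 0 := rfl
@[simp] lemma one_m2 : (1 : TB α β).m2 = 0 := rfl
@[simp] lemma one_m3 : (1 : TB α β).m3 = 0 := rfl
@[simp] lemma one_m4 : (1 : TB α β).m4 = 0 := rfl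
@[simp] lemma one_m5 : (1 : TB α β).m5 = 0 := rfl
@[simp] lemma one_m6 : (1 : TB α β).m6 = 0 := rfl
@[simp] lemma smul_s (r : ℂ) (A : TB α β) : (r • A).s = r * A.s := rfl
@[simp] lemma smul_x (r : ℂ) (A : TB α β) : (r • A).x = r * A.x := rfl
@[simp] lemma smul_y (r : ℂ) (A : TB α β) : (r • A).y = r * A.y := rfl
@[simp] lemma smul_z (r : ℂ) (A : TB α β) : (r • A).z = r * A.z := rfl
@[simp] lemma smul_m1 (r : ℂ) (A : TB α β) : (r • A).m1 = r * A.m1 := rfl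
@[simp] lemma smul_m2 (r : ℂ) (A : TB α β) : (r • A).m2 = r * A.m2 := rfl
@[simp] lemma smul_m3 (r : ℂ) (A : TB α β) : (r • A).m3 = r * A.m3 := rfl
@[simp] lemma smul_m4 (r : ℂ) (A : TB α β) : (r • A).m4 = r * A.m4 := rfl
@[simp] lemma smul_m5 (r : ℂ) (A : TB α β) : (r • A).m5 = r * A.m5 := rfl
@[simp] lemma smul_m6 (r : ℂ) (A : TB α β) : (r • A).m6 = r * A.m6 := rfl
@[simp] lemma mul_s (A C : TB α β) : (A * C).s = A.s * C.s := rfl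
@[simp] lemma mul_x (A C : TB α β) : (A * C).x = A.s * C.x + A.x * C.s := rfl
@[simp] lemma mul_y (A C : TB α β) : (A * C).y = A.s * C.y + A.y * C.s := rfl
@[simp] lemma mul_z (A C : TB α β) : (A * C).z = A.s * C.z + A.z * C.s := rfl
@[simp] lemma mul_m1 (A C : TB α β) :
    (A * C).m1 = A.s * C.m1 + A.m1 * C.s + A.x * C.x + α⁻¹ * (A.z * C.y) := rfl
@[simp] lemma mul_m2 (A C : TB α β) :
    (A * C).m2 = A.s * C.m2 + A.m2 * C.s + A.x * C.y + β⁻¹ * (A.y * C.x) := rfl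
@[simp] lemma mul_m3 (A C : TB α β) :
    (A * C).m3 = A.s * C.m3 + A.m3 * C.s + A.x * C.z + β * (A.z * C.x) := rfl
@[simp] lemma mul_m4 (A C : TB α β) : (A * C).m4 = A.s * C.m4 + A.m4 * C.s + A.y * C.y := rfl
@[simp] lemma mul_m5 (A C : TB α β) :
    (A * C).m5 = A.s * C.m5 + A.m5 * C.s + A.y * C.z + α⁻¹ * (A.z * C.y) := rfl
@[simp] lemma mul_m6 (A C : TB α β) : (A * C).m6 = A.s * C.m6 + A.m6 * C.s + A.z * C.z := rfl

instance : AddCommGroup (TB α β) where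
  add_assoc := by intros; ext <;> simp <;> ring
  zero_add := by intros; ext <;> simp
  add_zero := by intros; ext <;> simp
  add_comm := by intros; ext <;> simp <;> ring
  neg_add_cancel := by intros; ext <;> simp
  nsmul := nsmulRec
  zsmul := zsmulRec

instance : Ring (TB α β) where
  __ := (inferInstance : AddCommGroup (TB α β))
  left_distrib := by intros; ext <;> simp <;> ring
  right_distrib := by intros; ext <;> simp <;> ring
  zero_mul := by intros; ext <;> simp
  mul_zero := by intros; ext <;> simp
  mul_assoc := by intros; ext <;> simp <;> ring
  one_mul := by intros; ext <;> simp
  mul_one := by intros; ext <;> simp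

instance : Module ℂ (TB α β) where
  one_smul := by intros; ext <;> simp
  mul_smul := by intros; ext <;> simp <;> ring
  smul_zero := by intros; ext <;> simp
  smul_add := by intros; ext <;> simp <;> ring
  add_smul := by intros; ext <;> simp <;> ring
  zero_smul := by intros; ext <;> simp

instance : Algebra ℂ (TB α β) :=
  Algebra.ofModule (by intros; ext <;> simp <;> ring) (by intros; ext <;> simp <;> ring)

end TB


abbrev QA (α β : ℂ) : Type :=
  QuadAlg (X*Y - β • (Y*X)) (X*X + Y*Z - α • (Z*Y)) (Z*X - β • (X*Z))

def mkQ (α β : ℂ) : F3 →ₐ[ℂ] QA α β :=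
  RingQuot.mkAlgHom ℂ (rel3 (X*Y - β • (Y*X)) (X*X + Y*Z - α • (Z*Y)) (Z*X - β • (X*Z)))

def G (α β : ℂ) (j : Fin 3) : QA α β := mkQ α β (FreeAlgebra.ι ℂ j)

lemma relQ1 (α β : ℂ) : G α β 0 * G α β 1 - β • (G α β 1 * G α β 0) = 0 := by
  have h : mkQ α β (X*Y - β • (Y*X)) = 0 := by
    rw [← map_zero (mkQ α β)]
    exact RingQuot.mkAlgHom_rel ℂ ⟨Or.inl rfl, rfl⟩
  simpa [map_sub, map_mul, map_smul, X, Y, G] using h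

lemma relQ2 (α β : ℂ) : G α β 0 * G α β 0 + G α β 1 * G α β 2 - α • (G α β 2 * G α β 1) = 0 := by
  have h : mkQ α β (X*X + Y*Z - α • (Z*Y)) = 0 := by
    rw [← map_zero (mkQ α β)]
    exact RingQuot.mkAlgHom_rel ℂ ⟨Or.inr (Or.inl rfl), rfl⟩
  simpa [map_sub, map_add, map_mul, map_smul, X, Y, Z, G] using h

lemma relQ3 (α β : ℂ) : G α β 2 * G α β 0 - β • (G α β 0 * G α β 2) = 0 := by
  have h : mkQ α β (Z*X - β • (X*Z)) = 0 := by
    rw [← map_zero (mkQ α β)]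
    exact RingQuot.mkAlgHom_rel ℂ ⟨Or.inr (Or.inr rfl), rfl⟩
  simpa [map_sub, map_mul, map_smul, X, Z, G] using h

/-- generators of the truncated model -/
def bgen (α β : ℂ) : Fin 3 → TB α β :=
  ![⟨0,1,0,0,0,0,0,0,0,0⟩, ⟨0,0,1,0,0,0,0,0,0,0⟩, ⟨0,0,0,1,0,0,0,0,0,0⟩]

def phiB (α β : ℂ) : F3 →ₐ[ℂ] TB α β := FreeAlgebra.lift ℂ (bgen α β)

lemma phiB_rel (α β : ℂ) (hα : α ≠ 0) (hβ : β ≠ 0) ⦃a b : F3⦄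
    (h : rel3 (X*Y - β • (Y*X)) (X*X + Y*Z - α • (Z*Y)) (Z*X - β • (X*Z)) a b) :
    phiB α β a = phiB α β b := by
  obtain ⟨(rfl|rfl|rfl), rfl⟩ := h <;>
    · simp only [map_sub, map_add, map_mul, map_smul, map_zero, X, Y, Z, phiB,
        FreeAlgebra.lift_ι_apply, bgen, Matrix.cons_val_zero, Matrix.cons_val_one,
        Matrix.head_cons, Matrix.cons_val_two, Matrix.tail_cons]
      ext <;> simp [sub_eq_add_neg, mul_inv_cancel₀, inv_mul_cancel₀, hα, hβ]

def psiB (α β : ℂ) (hα : α ≠ 0) (hβ : β ≠ 0) : QA α β →ₐ[ℂ] TB α β :=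
  RingQuot.liftAlgHom ℂ ⟨phiB α β, phiB_rel α β hα hβ⟩

lemma psiB_G (α β : ℂ) (hα : α ≠ 0) (hβ : β ≠ 0) (j : Fin 3) :
    psiB α β hα hβ (G α β j) = bgen α β j := by
  rw [psiB, G, mkQ, RingQuot.liftAlgHom_mkAlgHom_apply, phiB, FreeAlgebra.lift_ι_apply]

lemma indepQ (α β : ℂ) (hα : α ≠ 0) (hβ : β ≠ 0) {c1 c2 c3 : ℂ}
    (h : c1 • G α β 0 + c2 • G α β 1 + c3 • G α β 2 = 0) : c1 = 0 ∧ c2 = 0 ∧ c3 = 0 := by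
  have h2 := congrArg (psiB α β hα hβ) h
  simp only [map_add, map_smul, psiB_G, map_zero] at h2
  refine ⟨?_, ?_, ?_⟩
  · have := congrArg TB.x h2; simp [bgen] at this; linear_combination this
  · have := congrArg TB.y h2; simp [bgen] at this; linear_combination this
  · have := congrArg TB.z h2; simp [bgen] at this; linear_combination this

lemma quadQ (α β : ℂ) (hα : α ≠ 0) (hβ : β ≠ 0)
    {c00 c01 c02 c10 c11 c12 c20 c21 c22 : ℂ}
    (h : c00 • (G α β 0 * G α β 0) + c01 • (G α β 0 * G α β 1) + c02 • (G α β 0 * G α β 2)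
       + c10 • (G α β 1 * G α β 0) + c11 • (G α β 1 * G α β 1) + c12 • (G α β 1 * G α β 2)
       + c20 • (G α β 2 * G α β 0) + c21 • (G α β 2 * G α β 1) + c22 • (G α β 2 * G α β 2) = 0) :
    (c00 + α⁻¹ * c21 = 0) ∧ (c01 + β⁻¹ * c10 = 0) ∧ (c02 + β * c20 = 0) ∧
      c11 = 0 ∧ (c12 + α⁻¹ * c21 = 0) ∧ c22 = 0 := by
  have h2 := congrArg (psiB α β hα hβ) h
  simp only [map_add, map_smul, map_mul, psiB_G, map_zero] at h2
  refine ⟨?_, ?_, ?_, ?_, ?_, ?_⟩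
  · have := congrArg TB.m1 h2; simp [bgen] at this; linear_combination this
  · have := congrArg TB.m2 h2; simp [bgen] at this; linear_combination this
  · have := congrArg TB.m3 h2; simp [bgen] at this; linear_combination this
  · have := congrArg TB.m4 h2; simp [bgen] at this; linear_combination this
  · have := congrArg TB.m5 h2; simp [bgen] at this; linear_combination this
  · have := congrArg TB.m6 h2; simp [bgen] at this; linear_combination this

lemma clearinv (u v w : ℂ) (hw : w ≠ 0) (h : u + w⁻¹ * v = 0) : w * u + v = 0 := by
  have hwi : w * w⁻¹ = 1 := mul_inv_cancel₀ hw
  linear_combination w * h - v * hwi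

lemma factor_zero {u v : ℂ} (h : u * v = 0) (hu : u ≠ 0) : v = 0 :=
  (mul_eq_zero.mp h).resolve_left hu

lemma factor_zero' {u v : ℂ} (h : u * v = 0) (hv : v ≠ 0) : u = 0 :=
  (mul_eq_zero.mp h).resolve_right hv

lemma solveSys (α β α' β' a b c d e f g h i : ℂ)
    (hα : α ≠ 0) (hβ : β ≠ 0) (hα' : α' ≠ 0) (hβ' : β' ≠ 0)
    (hαβ : α * β^2 ≠ 1) (hαβ' : α' * β'^2 ≠ 1)
    (hdet : a*e*i - a*f*h - b*d*i + b*f*g + c*d*h - c*e*g ≠ 0)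
    (E0 : (a*d - β*(d*a)) + α'⁻¹*(c*e - β*(f*b)) = 0)
    (E1 : (a*e - β*(d*b)) + β'⁻¹*(b*d - β*(e*a)) = 0)
    (E2 : (a*f - β*(d*c)) + β'*(c*d - β*(f*a)) = 0)
    (E3 : b*e - β*(e*b) = 0)
    (E4 : (b*f - β*(e*c)) + α'⁻¹*(c*e - β*(f*b)) = 0)
    (E5 : c*f - β*(f*c) = 0)
    (F0 : (g*a - β*(a*g)) + α'⁻¹*(i*b - β*(c*h)) = 0)
    (F1 : (g*b - β*(a*h)) + β'⁻¹*(h*a - β*(b*g)) = 0)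
    (F2 : (g*c - β*(a*i)) + β'*(i*a - β*(c*g)) = 0)
    (F3 : h*b - β*(b*h) = 0)
    (F4 : (h*c - β*(b*i)) + α'⁻¹*(i*b - β*(c*h)) = 0)
    (F5 : i*c - β*(c*i) = 0)
    (P0 : (a*a + d*g - α*(g*d)) + α'⁻¹*(c*b + f*h - α*(i*e)) = 0)
    (P1 : (a*b + d*h - α*(g*e)) + β'⁻¹*(b*a + e*g - α*(h*d)) = 0)
    (P2 : (a*c + d*i - α*(g*f)) + β'*(c*a + f*g - α*(i*d)) = 0)
    (P3 : b*b + e*h - α*(h*e) = 0)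
    (P4 : (b*c + e*i - α*(h*f)) + α'⁻¹*(c*b + f*h - α*(i*e)) = 0)
    (P5 : c*c + f*i - α*(i*f) = 0) :
    (α' = α ∧ β' = β) ∨ (α' = α⁻¹ ∧ β' = β⁻¹) := by
  have e0 := clearinv _ _ _ hα' E0
  have e1 := clearinv _ _ _ hβ' E1
  have f0 := clearinv _ _ _ hα' F0
  have f1 := clearinv _ _ _ hβ' F1
  have p1 := clearinv _ _ _ hβ' P1
  have p4 := clearinv _ _ _ hα' P4
  by_cases hb1 : β = 1
  · --------------------------------------------------------------- β = 1
    subst hb1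
    have hα1 : α ≠ 1 := fun hh => hαβ (by rw [hh]; ring)
    have hα1' : (1:ℂ) - α ≠ 0 := sub_ne_zero.mpr (Ne.symm hα1)
    by_cases hbp1 : β' = 1
    · ---- β' = 1 as well
      subst hbp1
      have hbf : b*f - c*e = 0 := by linear_combination -e0
      have hbi : b*i - c*h = 0 := by linear_combination f0
      -- first: b = 0
      have hb : b = 0 := by
        by_contra hbne
        exact hdet (factor_zero (show
          b * (a*e*i - a*f*h - b*d*i + b*f*g + c*d*h - c*e*g) = 0 by
            linear_combination (a*e - b*d)*hbi + (b*g - a*h)*hbf) hbne)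
      subst hb
      -- then: c = 0
      have hc : c = 0 := by
        by_contra hcne
        have he : e = 0 := factor_zero' (show e*c = 0 by linear_combination -hbf) hcne
        have hh : h = 0 := factor_zero' (show h*c = 0 by linear_combination -hbi) hcne
        exact hdet (by rw [he, hh]; ring)
      subst hc
      -- now a ≠ 0 and e*i - f*h ≠ 0
      have ha : a ≠ 0 := fun hh => hdet (by rw [hh]; ring)
      have hei : e*i - f*h ≠ 0 := fun hh => hdet (by
        have : a*e*i - a*f*h - 0*d*i + 0*f*g + 0*d*h - 0*e*g = a*(e*i - f*h) := by ring
        rw [this, hh, mul_zero])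
      have heh : e*h = 0 := factor_zero' (show e*h*((1:ℂ)-α) = 0 by linear_combination P3) hα1'
      have hfi : f*i = 0 := factor_zero' (show f*i*((1:ℂ)-α) = 0 by linear_combination P5) hα1'
      have hdheg : d*h + e*g = 0 :=
        factor_zero' (show (d*h + e*g)*((1:ℂ)-α) = 0 by linear_combination p1) hα1'
      have hdifg : d*i + f*g = 0 :=
        factor_zero' (show (d*i + f*g)*((1:ℂ)-α) = 0 by linear_combination P2) hα1'
      by_cases he : e = 0
      · -- second solution branch (α' = α⁻¹)
        subst he
        have hfh : f*h ≠ 0 := fun hh => hei (by linear_combination -hh)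
        have hf : f ≠ 0 := fun hh => hfh (by rw [hh]; ring)
        have hh : h ≠ 0 := fun hh => hfh (by rw [hh]; ring)
        have hi : i = 0 := factor_zero hfi hf
        have hd : d = 0 := factor_zero' (show d*h = 0 by linear_combination hdheg) hh
        have hg : g = 0 := by rw [hi] at hdifg; exact factor_zero' (show g*f = 0 by linear_combination hdifg) hf
        have hkey : f*h*(α*α' - 1) = 0 := by rw [hi] at p4; linear_combination -p4
        have hαα' : α*α' = 1 := by
          have h2 := factor_zero hkey hfh; linear_combination h2
        exact Or.inr ⟨eq_inv_of_mul_eq_one_left (by linear_combination hαα'), by norm_num⟩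
      · -- first solution branch (α' = α)
        have hh : h = 0 := factor_zero heh he
        have hf : f = 0 := by
          by_contra hfne
          have hi : i = 0 := factor_zero hfi hfne
          exact hei (by rw [hi, hh]; ring)
        have hi : e*i ≠ 0 := fun hh2 => hei (by rw [hf]; linear_combination hh2)
        have hg : g = 0 := factor_zero' (show g*e = 0 by rw [hh] at hdheg; linear_combination hdheg) he
        have hie : i ≠ 0 := fun hh2 => hi (by rw [hh2]; ring)
        have hd : d = 0 := factor_zero' (show d*i = 0 by rw [hf] at hdifg; linear_combination hdifg) hie
        have hkey : e*i*(α' - α) = 0 := by rw [hh, hf] at p4; linear_combination p4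
        have : α' = α := by have h2 := factor_zero hkey hi; linear_combination h2
        exact Or.inl ⟨this, rfl⟩
    · ---- β' ≠ 1 : contradiction
      exfalso
      have hbp : β' - 1 ≠ 0 := sub_ne_zero.mpr hbp1
      have hA : a*e - b*d = 0 :=
        factor_zero (show (β' - 1) * (a*e - b*d) = 0 by linear_combination e1) hbp
      have hB : a*f - c*d = 0 :=
        factor_zero (show (β' - 1) * (a*f - c*d) = 0 by linear_combination -E2) hbp
      have hC : g*b - a*h = 0 :=
        factor_zero (show (β' - 1) * (g*b - a*h) = 0 by linear_combination f1) hbp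
      have hD : g*c - a*i = 0 :=
        factor_zero (show (β' - 1) * (g*c - a*i) = 0 by linear_combination -F2) hbp
      by_cases ha : a = 0
      · subst ha
        have hbd : b*d = 0 := by linear_combination -hA
        have hcd : c*d = 0 := by linear_combination -hB
        have hgb : g*b = 0 := by linear_combination hC
        have hgc : g*c = 0 := by linear_combination hD
        by_cases hd : d = 0
        · by_cases hg : g = 0
          · exact hdet (by rw [hd, hg]; ring)
          · have hb : b = 0 := factor_zero hgb hg
            have hc : c = 0 := factor_zero hgc hg
            exact hdet (by rw [hb, hc]; ring)
        · have hb : b = 0 := factor_zero' hbd hd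
          have hc : c = 0 := factor_zero' hcd hd
          exact hdet (by rw [hb, hc]; ring)
      · have key : a^2 * (a*e*i - a*f*h - b*d*i + b*f*g + c*d*h - c*e*g) = 0 := by
          linear_combination (a*(g*b - a*h))*hB - (a*(a*e - b*d))*hD
        exact hdet (factor_zero key (pow_ne_zero 2 ha))
  · --------------------------------------------------------------- β ≠ 1
    have hβ1 : (1:ℂ) - β ≠ 0 := sub_ne_zero.mpr (Ne.symm hb1)
    -- b = 0
    have hb : b = 0 := by
      by_contra hbne
      have he : e = 0 :=
        factor_zero (factor_zero' (show b*e*((1:ℂ)-β) = 0 by linear_combination E3) hβ1) hbne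
      have hh : h = 0 :=
        factor_zero (factor_zero' (show b*h*((1:ℂ)-β) = 0 by linear_combination F3) hβ1) hbne
      have hbb : b*b = 0 := by rw [he, hh] at P3; linear_combination P3
      exact hbne (mul_self_eq_zero.mp hbb)
    subst hb
    -- c = 0
    have hc : c = 0 := by
      by_contra hcne
      have hf : f = 0 :=
        factor_zero' (factor_zero' (show f*c*((1:ℂ)-β) = 0 by linear_combination E5) hβ1) hcne
      have hi : i = 0 :=
        factor_zero' (factor_zero' (show i*c*((1:ℂ)-β) = 0 by linear_combination F5) hβ1) hcne
      have hcc : c*c = 0 := by rw [hf, hi] at P5; linear_combination P5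
      exact hcne (mul_self_eq_zero.mp hcc)
    subst hc
    -- a ≠ 0, e*i - f*h ≠ 0
    have ha : a ≠ 0 := fun hh => hdet (by rw [hh]; ring)
    have hei : e*i - f*h ≠ 0 := fun hh => hdet (by
      have h2 : a*e*i - a*f*h - 0*d*i + 0*f*g + 0*d*h - 0*e*g = a*(e*i - f*h) := by ring
      rw [h2, hh, mul_zero])
    -- d = 0 and g = 0
    have hd : d = 0 := by
      have h2 : α'*(a*(d*((1:ℂ)-β))) = 0 := by linear_combination e0
      exact factor_zero' (factor_zero (factor_zero h2 hα') ha) hβ1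
    have hg : g = 0 := by
      have h2 : α'*(g*(a*((1:ℂ)-β))) = 0 := by linear_combination f0
      exact factor_zero' (factor_zero h2 hα') (mul_ne_zero ha hβ1)
    subst hd; subst hg
    -- simplified relations
    have he1 : a*e*(β' - β) = 0 := by linear_combination e1
    have hE2 : a*f*((1:ℂ) - β*β') = 0 := by linear_combination E2
    have hf1 : a*h*((1:ℂ) - β*β') = 0 := by linear_combination f1
    have hF2 : a*i*(β' - β) = 0 := by linear_combination F2
    have hP3 : e*h*((1:ℂ)-α) = 0 := by linear_combination P3
    have hP5 : f*i*((1:ℂ)-α) = 0 := by linear_combination P5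
    by_cases he : e = 0
    · -- second solution (α' = α⁻¹, β' = β⁻¹)
      subst he
      have hfh : f*h ≠ 0 := fun hh => hei (by linear_combination -hh)
      have hf : f ≠ 0 := fun hh => hfh (by rw [hh]; ring)
      have hh : h ≠ 0 := fun hh => hfh (by rw [hh]; ring)
      have hββ' : β*β' = 1 := by
        have h2 := factor_zero (factor_zero (show a*(f*((1:ℂ)-β*β')) = 0 by
          linear_combination hE2) ha) hf
        linear_combination -h2
      have hi : i = 0 := by
        by_contra hine
        have hb'b : β' = β := by
          have h2 := factor_zero (factor_zero (show a*(i*(β'-β)) = 0 by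
            linear_combination hF2) ha) hine
          linear_combination h2
        have hβ2 : β*β = 1 := by rw [hb'b] at hββ'; exact hββ'
        have hα1 : α = 1 := by
          have h2 := factor_zero (factor_zero (show f*(i*((1:ℂ)-α)) = 0 by
            linear_combination hP5) hf) hine
          linear_combination -h2
        exact hαβ (by rw [hα1, sq]; rw [hβ2]; ring)
      have hkey : f*h*(α*α' - 1) = 0 := by rw [hi] at p4; linear_combination -p4
      have hαα' : α*α' = 1 := by
        have h2 := factor_zero hkey hfh; linear_combination h2
      exact Or.inr ⟨eq_inv_of_mul_eq_one_left (by linear_combination hαα'),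
        eq_inv_of_mul_eq_one_left (by linear_combination hββ')⟩
    · -- first solution (α' = α, β' = β)
      have hb'b : β' = β := by
        have h2 := factor_zero (factor_zero (show a*(e*(β'-β)) = 0 by
          linear_combination he1) ha) he
        linear_combination h2
      have hf : f = 0 := by
        by_contra hfne
        have hβ2 : β*β = 1 := by
          have h2 := factor_zero (factor_zero (show a*(f*((1:ℂ)-β*β')) = 0 by
            linear_combination hE2) ha) hfne
          rw [hb'b] at h2; linear_combination -h2
        by_cases hα1 : α = 1
        · exact hαβ (by rw [hα1, sq, hβ2]; ring)
        · have hα1' : (1:ℂ) - α ≠ 0 := sub_ne_zero.mpr (Ne.symm hα1)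
          have hh : h = 0 := factor_zero' (show h*(e*((1:ℂ)-α)) = 0 by linear_combination hP3) (mul_ne_zero he hα1')
          have hi : i = 0 := factor_zero (factor_zero' hP5 hα1') hfne
          exact hei (by rw [hh, hi]; ring)
      have hi : e*i ≠ 0 := fun hh2 => hei (by rw [hf]; linear_combination hh2)
      have hie : i ≠ 0 := fun hh2 => hi (by rw [hh2]; ring)
      have hh : h = 0 := by
        by_contra hhne
        have hβ2 : β*β = 1 := by
          have h2 := factor_zero (factor_zero (show a*(h*((1:ℂ)-β*β')) = 0 by
            linear_combination hf1) ha) hhne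
          rw [hb'b] at h2; linear_combination -h2
        by_cases hα1 : α = 1
        · exact hαβ (by rw [hα1, sq, hβ2]; ring)
        · have hα1' : (1:ℂ) - α ≠ 0 := sub_ne_zero.mpr (Ne.symm hα1)
          exact he (factor_zero' (factor_zero' hP3 hα1') hhne)
      have hkey : e*i*(α' - α) = 0 := by rw [hh, hf] at p4; linear_combination p4
      have : α' = α := by have h2 := factor_zero hkey hi; linear_combination h2
      exact Or.inl ⟨this, hb'b⟩


lemma mem_span_triple {M : Type*} [AddCommGroup M] [Module ℂ M] {u v w x : M}
    (hx : x ∈ Submodule.span ℂ {u, v, w}) : ∃ p q r : ℂ, x = p•u + q•v + r•w := by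
  rw [Submodule.mem_span_insert] at hx
  obtain ⟨p, z, hz, rfl⟩ := hx
  rw [Submodule.mem_span_insert] at hz
  obtain ⟨q, z2, hz2, rfl⟩ := hz
  rw [Submodule.mem_span_singleton] at hz2
  obtain ⟨r, rfl⟩ := hz2
  exact ⟨p, q, r, by module⟩

lemma forward (α β α' β' : ℂ)
    (hα : α ≠ 0) (hβ : β ≠ 0) (hα' : α' ≠ 0) (hβ' : β' ≠ 0)
    (hαβ : α * β^2 ≠ 1) (hαβ' : α' * β'^2 ≠ 1)
    (E : QA α β ≃ₐ[ℂ] QA α' β')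
    (hspan : Submodule.map E.toLinearMap
        (Submodule.span ℂ {G α β 0, G α β 1, G α β 2}) =
      Submodule.span ℂ {G α' β' 0, G α' β' 1, G α' β' 2}) :
    (α' = α ∧ β' = β) ∨ (α' = α⁻¹ ∧ β' = β⁻¹) := by
  have hmem : ∀ j, E (G α β j) ∈ Submodule.span ℂ {G α' β' 0, G α' β' 1, G α' β' 2} := by
    intro j
    rw [← hspan]
    exact Submodule.mem_map_of_mem (Submodule.subset_span (by fin_cases j <;> simp))
  obtain ⟨a1,b1,c1,hE0⟩ := mem_span_triple (hmem 0)
  obtain ⟨d1,e1,f1,hE1⟩ := mem_span_triple (hmem 1)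
  obtain ⟨g1,h1,i1,hE2⟩ := mem_span_triple (hmem 2)
  have hspan2 : Submodule.map E.symm.toLinearMap
      (Submodule.span ℂ {G α' β' 0, G α' β' 1, G α' β' 2}) =
      Submodule.span ℂ {G α β 0, G α β 1, G α β 2} := by
    rw [← hspan]
    ext y
    simp only [Submodule.mem_map]
    constructor
    · rintro ⟨y2, ⟨y3, hy3, rfl⟩, rfl⟩
      simpa using hy3
    · intro hy
      exact ⟨E y, ⟨y, hy, rfl⟩, by simp⟩
  have hmem2 : ∀ j, E.symm (G α' β' j) ∈ Submodule.span ℂ {G α β 0, G α β 1, G α β 2} := by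
    intro j
    rw [← hspan2]
    exact Submodule.mem_map_of_mem (Submodule.subset_span (by fin_cases j <;> simp))
  obtain ⟨p1,q1,r1,hS0⟩ := mem_span_triple (hmem2 0)
  obtain ⟨s1,t1,u1,hS1⟩ := mem_span_triple (hmem2 1)
  obtain ⟨v1,w1,x1,hS2⟩ := mem_span_triple (hmem2 2)
  -- invertibility equations
  have hc0 : (a1*p1 + b1*s1 + c1*v1 - 1) • (G α β 0) + (a1*q1 + b1*t1 + c1*w1) • (G α β 1)
      + (a1*r1 + b1*u1 + c1*x1) • (G α β 2) = 0 := by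
    have h0 := E.symm_apply_apply (G α β 0)
    rw [hE0, map_add, map_add, map_smul, map_smul, map_smul, hS0, hS1, hS2] at h0
    linear_combination (norm := module) h0
  have hc1 : (d1*p1 + e1*s1 + f1*v1) • (G α β 0) + (d1*q1 + e1*t1 + f1*w1 - 1) • (G α β 1)
      + (d1*r1 + e1*u1 + f1*x1) • (G α β 2) = 0 := by
    have h0 := E.symm_apply_apply (G α β 1)
    rw [hE1, map_add, map_add, map_smul, map_smul, map_smul, hS0, hS1, hS2] at h0
    linear_combination (norm := module) h0
  have hc2 : (g1*p1 + h1*s1 + i1*v1) • (G α β 0) + (g1*q1 + h1*t1 + i1*w1) • (G α β 1)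
      + (g1*r1 + h1*u1 + i1*x1 - 1) • (G α β 2) = 0 := by
    have h0 := E.symm_apply_apply (G α β 2)
    rw [hE2, map_add, map_add, map_smul, map_smul, map_smul, hS0, hS1, hS2] at h0
    linear_combination (norm := module) h0
  obtain ⟨m00, m01, m02⟩ := indepQ α β hα hβ hc0
  obtain ⟨m10, m11, m12⟩ := indepQ α β hα hβ hc1
  obtain ⟨m20, m21, m22⟩ := indepQ α β hα hβ hc2
  -- determinant nonzero
  have hMN : (Matrix.of ![![a1,b1,c1],![d1,e1,f1],![g1,h1,i1]]) *
      (Matrix.of ![![p1,q1,r1],![s1,t1,u1],![v1,w1,x1]]) = 1 := by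
    ext j k
    fin_cases j <;> fin_cases k <;>
      simp [Matrix.mul_apply, Fin.sum_univ_three, Matrix.one_apply]
    · linear_combination m00
    · linear_combination m01
    · linear_combination m02
    · linear_combination m10
    · linear_combination m11
    · linear_combination m12
    · linear_combination m20
    · linear_combination m21
    · linear_combination m22
  have hdet2 : (Matrix.of ![![a1,b1,c1],![d1,e1,f1],![g1,h1,i1]]).det ≠ 0 := by
    apply left_ne_zero_of_mul_eq_one (b := (Matrix.of ![![p1,q1,r1],![s1,t1,u1],![v1,w1,x1]]).det)
    rw [← Matrix.det_mul, hMN, Matrix.det_one]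
  have hDet : a1*e1*i1 - a1*f1*h1 - b1*d1*i1 + b1*f1*g1 + c1*d1*h1 - c1*e1*g1 ≠ 0 := by
    intro hzero
    apply hdet2
    rw [Matrix.det_fin_three]
    simp only [Matrix.of_apply, Matrix.cons_val', Matrix.cons_val_zero, Matrix.empty_val',
      Matrix.cons_val_fin_one, Matrix.cons_val_one, Matrix.head_cons, Matrix.head_fin_const,
      Matrix.cons_val_two, Matrix.tail_cons, Matrix.head_val', Matrix.tail_val']
    linear_combination hzero
  -- relation transport
  have hr1 : E (G α β 0) * E (G α β 1) - β • (E (G α β 1) * E (G α β 0)) = 0 := by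
    rw [← map_mul, ← map_mul, ← map_smul, ← map_sub, relQ1, map_zero]
  rw [hE0, hE1] at hr1
  simp only [mul_add, add_mul, smul_mul_assoc, mul_smul_comm, smul_smul, smul_add,
    smul_sub] at hr1
  have key1 : (a1*d1 - β*(d1*a1)) • (G α' β' 0 * G α' β' 0)
      + (a1*e1 - β*(d1*b1)) • (G α' β' 0 * G α' β' 1)
      + (a1*f1 - β*(d1*c1)) • (G α' β' 0 * G α' β' 2)
      + (b1*d1 - β*(e1*a1)) • (G α' β' 1 * G α' β' 0)
      + (b1*e1 - β*(e1*b1)) • (G α' β' 1 * G α' β' 1)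
      + (b1*f1 - β*(e1*c1)) • (G α' β' 1 * G α' β' 2)
      + (c1*d1 - β*(f1*a1)) • (G α' β' 2 * G α' β' 0)
      + (c1*e1 - β*(f1*b1)) • (G α' β' 2 * G α' β' 1)
      + (c1*f1 - β*(f1*c1)) • (G α' β' 2 * G α' β' 2) = 0 := by
    linear_combination (norm := module) hr1
  have hr2 : E (G α β 0) * E (G α β 0) + E (G α β 1) * E (G α β 2)
      - α • (E (G α β 2) * E (G α β 1)) = 0 := by
    rw [← map_mul, ← map_mul, ← map_mul, ← map_smul, ← map_add, ← map_sub, relQ2, map_zero]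
  rw [hE0, hE1, hE2] at hr2
  simp only [mul_add, add_mul, smul_mul_assoc, mul_smul_comm, smul_smul, smul_add,
    smul_sub] at hr2
  have key2 : (a1*a1 + d1*g1 - α*(g1*d1)) • (G α' β' 0 * G α' β' 0)
      + (a1*b1 + d1*h1 - α*(g1*e1)) • (G α' β' 0 * G α' β' 1)
      + (a1*c1 + d1*i1 - α*(g1*f1)) • (G α' β' 0 * G α' β' 2)
      + (b1*a1 + e1*g1 - α*(h1*d1)) • (G α' β' 1 * G α' β' 0)
      + (b1*b1 + e1*h1 - α*(h1*e1)) • (G α' β' 1 * G α' β' 1)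
      + (b1*c1 + e1*i1 - α*(h1*f1)) • (G α' β' 1 * G α' β' 2)
      + (c1*a1 + f1*g1 - α*(i1*d1)) • (G α' β' 2 * G α' β' 0)
      + (c1*b1 + f1*h1 - α*(i1*e1)) • (G α' β' 2 * G α' β' 1)
      + (c1*c1 + f1*i1 - α*(i1*f1)) • (G α' β' 2 * G α' β' 2) = 0 := by
    linear_combination (norm := module) hr2
  have hr3 : E (G α β 2) * E (G α β 0) - β • (E (G α β 0) * E (G α β 2)) = 0 := by
    rw [← map_mul, ← map_mul, ← map_smul, ← map_sub, relQ3, map_zero]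
  rw [hE0, hE2] at hr3
  simp only [mul_add, add_mul, smul_mul_assoc, mul_smul_comm, smul_smul, smul_add,
    smul_sub] at hr3
  have key3 : (g1*a1 - β*(a1*g1)) • (G α' β' 0 * G α' β' 0)
      + (g1*b1 - β*(a1*h1)) • (G α' β' 0 * G α' β' 1)
      + (g1*c1 - β*(a1*i1)) • (G α' β' 0 * G α' β' 2)
      + (h1*a1 - β*(b1*g1)) • (G α' β' 1 * G α' β' 0)
      + (h1*b1 - β*(b1*h1)) • (G α' β' 1 * G α' β' 1)
      + (h1*c1 - β*(b1*i1)) • (G α' β' 1 * G α' β' 2)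
      + (i1*a1 - β*(c1*g1)) • (G α' β' 2 * G α' β' 0)
      + (i1*b1 - β*(c1*h1)) • (G α' β' 2 * G α' β' 1)
      + (i1*c1 - β*(c1*i1)) • (G α' β' 2 * G α' β' 2) = 0 := by
    linear_combination (norm := module) hr3
  obtain ⟨Q0, Q1, Q2, Q3, Q4, Q5⟩ := quadQ α' β' hα' hβ' key1
  obtain ⟨R0, R1, R2, R3, R4, R5⟩ := quadQ α' β' hα' hβ' key2
  obtain ⟨S0, S1, S2, S3, S4, S5⟩ := quadQ α' β' hα' hβ' key3
  exact solveSys α β α' β' a1 b1 c1 d1 e1 f1 g1 h1 i1 hα hβ hα' hβ' hαβ hαβ' hDet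
    Q0 Q1 Q2 Q3 Q4 Q5 S0 S1 S2 S3 S4 S5 R0 R1 R2 R3 R4 R5

lemma backIso (α β : ℂ) (hα : α ≠ 0) (hβ : β ≠ 0) :
    ∃ E : QA α β ≃ₐ[ℂ] QA α⁻¹ β⁻¹,
      Submodule.map E.toLinearMap (Submodule.span ℂ {G α β 0, G α β 1, G α β 2}) =
        Submodule.span ℂ {G α⁻¹ β⁻¹ 0, G α⁻¹ β⁻¹ 1, G α⁻¹ β⁻¹ 2} := by
  have hββ : β * β⁻¹ = 1 := mul_inv_cancel₀ hβ
  have hαα : α * α⁻¹ = 1 := mul_inv_cancel₀ hα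
  set α₂ := α⁻¹ with hα₂
  set β₂ := β⁻¹ with hβ₂
  -- forward algebra hom
  have hrelF : ∀ ⦃u w : F3⦄,
      rel3 (X*Y - β • (Y*X)) (X*X + Y*Z - α • (Z*Y)) (Z*X - β • (X*Z)) u w →
      (FreeAlgebra.lift ℂ ![G α₂ β₂ 0, G α₂ β₂ 2, (-α₂) • G α₂ β₂ 1]) u =
      (FreeAlgebra.lift ℂ ![G α₂ β₂ 0, G α₂ β₂ 2, (-α₂) • G α₂ β₂ 1]) w := by
    rintro u w ⟨(rfl|rfl|rfl), rfl⟩ <;>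
      simp only [map_sub, map_add, map_mul, map_smul, map_zero, X, Y, Z,
        FreeAlgebra.lift_ι_apply, Matrix.cons_val_zero, Matrix.cons_val_one, Matrix.head_cons,
        Matrix.cons_val_two, Matrix.tail_cons]
    · -- G₂0*G₂2 - β•(G₂2*G₂0) = 0
      have h3 := relQ3 α₂ β₂
      have h4 : G α₂ β₂ 2 * G α₂ β₂ 0 = β₂ • (G α₂ β₂ 0 * G α₂ β₂ 2) := by
        linear_combination (norm := module) h3
      rw [h4, smul_smul, mul_comm β β₂, hβ₂]
      rw [inv_mul_cancel₀ hβ, one_smul, sub_self]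
    · -- G₂0*G₂0 + G₂2*((-α₂)•G₂1) - α•(((-α₂)•G₂1)*G₂2) = 0
      have h2 := relQ2 α₂ β₂
      simp only [smul_mul_assoc, mul_smul_comm, smul_smul, neg_smul, mul_neg, neg_neg,
        smul_neg, sub_neg_eq_add]
      rw [show α * α₂ = 1 from mul_inv_cancel₀ hα]
      rw [one_smul]
      linear_combination (norm := module) h2
    · -- ((-α₂)•G₂1)*G₂0 - β•(G₂0*((-α₂)•G₂1)) = 0
      have h1 := relQ1 α₂ β₂
      have h4 : G α₂ β₂ 0 * G α₂ β₂ 1 = β₂ • (G α₂ β₂ 1 * G α₂ β₂ 0) := by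
        linear_combination (norm := module) h1
      simp only [smul_mul_assoc, mul_smul_comm, smul_smul, neg_smul, mul_neg, neg_neg,
        smul_neg, sub_neg_eq_add]
      rw [h4, smul_smul]
      rw [show β * α₂ * β₂ = α₂ * (β * β₂) from by ring, hββ, mul_one]
      module
  have hrelB : ∀ ⦃u w : F3⦄,
      rel3 (X*Y - β₂ • (Y*X)) (X*X + Y*Z - α₂ • (Z*Y)) (Z*X - β₂ • (X*Z)) u w →
      (FreeAlgebra.lift ℂ ![G α β 0, (-α) • G α β 2, G α β 1]) u =
      (FreeAlgebra.lift ℂ ![G α β 0, (-α) • G α β 2, G α β 1]) w := by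
    rintro u w ⟨(rfl|rfl|rfl), rfl⟩ <;>
      simp only [map_sub, map_add, map_mul, map_smul, map_zero, X, Y, Z,
        FreeAlgebra.lift_ι_apply, Matrix.cons_val_zero, Matrix.cons_val_one, Matrix.head_cons,
        Matrix.cons_val_two, Matrix.tail_cons]
    · -- G0*((-α)•G2) - β₂•(((-α)•G2)*G0) = 0
      have h3 := relQ3 α β
      have h4 : G α β 2 * G α β 0 = β • (G α β 0 * G α β 2) := by
        linear_combination (norm := module) h3
      simp only [smul_mul_assoc, mul_smul_comm, smul_smul, neg_smul, mul_neg, neg_neg,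
        smul_neg, sub_neg_eq_add]
      rw [h4, smul_smul]
      rw [show β₂ * α * β = α * (β * β₂) from by ring, hββ, mul_one]
      module
    · -- G0*G0 + ((-α)•G2)*G1 - α₂•(G1*((-α)•G2)) = 0
      have h2 := relQ2 α β
      simp only [smul_mul_assoc, mul_smul_comm, smul_smul, neg_smul, mul_neg, neg_neg,
        smul_neg, sub_neg_eq_add]
      rw [show α₂ * α = 1 from inv_mul_cancel₀ hα, one_smul]
      linear_combination (norm := module) h2
    · -- G1*G0 - β₂•(G0*G1) = 0
      have h1 := relQ1 α β
      have h4 : G α β 0 * G α β 1 = β • (G α β 1 * G α β 0) := by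
        linear_combination (norm := module) h1
      rw [h4, smul_smul, mul_comm β₂ β, hββ, one_smul, sub_self]
  obtain ⟨eAB, heABdef⟩ : ∃ eAB : QA α β →ₐ[ℂ] QA α₂ β₂, eAB =
      RingQuot.liftAlgHom ℂ
        ⟨FreeAlgebra.lift ℂ ![G α₂ β₂ 0, G α₂ β₂ 2, (-α₂) • G α₂ β₂ 1], hrelF⟩ := ⟨_, rfl⟩
  obtain ⟨eBA, heBAdef⟩ : ∃ eBA : QA α₂ β₂ →ₐ[ℂ] QA α β, eBA =
      RingQuot.liftAlgHom ℂ
        ⟨FreeAlgebra.lift ℂ ![G α β 0, (-α) • G α β 2, G α β 1], hrelB⟩ := ⟨_, rfl⟩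
  have heAB : ∀ j : Fin 3, eAB (G α β j) =
      ![G α₂ β₂ 0, G α₂ β₂ 2, (-α₂) • G α₂ β₂ 1] j := by
    intro j
    show eAB (mkQ α β (FreeAlgebra.ι ℂ j)) = _
    rw [mkQ, heABdef, RingQuot.liftAlgHom_mkAlgHom_apply, FreeAlgebra.lift_ι_apply]
  have heBA : ∀ j : Fin 3, eBA (G α₂ β₂ j) =
      ![G α β 0, (-α) • G α β 2, G α β 1] j := by
    intro j
    show eBA (mkQ α₂ β₂ (FreeAlgebra.ι ℂ j)) = _
    rw [mkQ, heBAdef, RingQuot.liftAlgHom_mkAlgHom_apply, FreeAlgebra.lift_ι_apply]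
  have heAB0 : eAB (G α β 0) = G α₂ β₂ 0 := by simpa using heAB 0
  have heAB1 : eAB (G α β 1) = G α₂ β₂ 2 := by simpa using heAB 1
  have heAB2 : eAB (G α β 2) = (-α₂) • G α₂ β₂ 1 := by simpa using heAB 2
  have heBA0 : eBA (G α₂ β₂ 0) = G α β 0 := by simpa using heBA 0
  have heBA1 : eBA (G α₂ β₂ 1) = (-α) • G α β 2 := by simpa using heBA 1
  have heBA2 : eBA (G α₂ β₂ 2) = G α β 1 := by simpa using heBA 2
  have hBA : eBA.comp eAB = AlgHom.id ℂ (QA α β) := by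
    apply RingQuot.ringQuot_ext'
    apply FreeAlgebra.hom_ext
    funext j
    fin_cases j
    · show eBA (eAB (G α β 0)) = G α β 0
      rw [heAB0, heBA0]
    · show eBA (eAB (G α β 1)) = G α β 1
      rw [heAB1, heBA2]
    · show eBA (eAB (G α β 2)) = G α β 2
      rw [heAB2, map_smul, heBA1, smul_smul,
        show (-α₂) * (-α) = α₂ * α from by ring, inv_mul_cancel₀ hα, one_smul]
  have hAB : eAB.comp eBA = AlgHom.id ℂ (QA α₂ β₂) := by
    apply RingQuot.ringQuot_ext'
    apply FreeAlgebra.hom_ext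
    funext j
    fin_cases j
    · show eAB (eBA (G α₂ β₂ 0)) = G α₂ β₂ 0
      rw [heBA0, heAB0]
    · show eAB (eBA (G α₂ β₂ 1)) = G α₂ β₂ 1
      rw [heBA1, map_smul, heAB2, smul_smul,
        show (-α) * (-α₂) = α * α₂ from by ring, mul_inv_cancel₀ hα, one_smul]
    · show eAB (eBA (G α₂ β₂ 2)) = G α₂ β₂ 2
      rw [heBA2, heAB1]
  refine ⟨AlgEquiv.ofAlgHom eAB eBA hAB hBA, ?_⟩
  rw [Submodule.map_span, Set.image_insert_eq, Set.image_insert_eq, Set.image_singleton]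
  have hco : ∀ y : QA α β, (AlgEquiv.ofAlgHom eAB eBA hAB hBA).toLinearMap y = eAB y :=
    fun y => rfl
  rw [hco, hco, hco, heAB0, heAB1, heAB2]
  apply le_antisymm
  · rw [Submodule.span_le]
    intro y hy
    simp only [Set.mem_insert_iff, Set.mem_singleton_iff] at hy
    rcases hy with rfl | rfl | rfl
    · exact Submodule.subset_span (by simp)
    · exact Submodule.subset_span (by simp)
    · exact Submodule.smul_mem _ _ (Submodule.subset_span (by simp))
  · rw [Submodule.span_le]
    intro y hy
    simp only [Set.mem_insert_iff, Set.mem_singleton_iff] at hy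
    rcases hy with rfl | rfl | rfl
    · exact Submodule.subset_span (by simp)
    · have hmem3 : (-α₂)⁻¹ • ((-α₂) • G α₂ β₂ 1) ∈
          Submodule.span ℂ {G α₂ β₂ 0, G α₂ β₂ 2, (-α₂) • G α₂ β₂ 1} :=
        Submodule.smul_mem _ _ (Submodule.subset_span (by simp))
      rwa [smul_smul, inv_mul_cancel₀ (neg_ne_zero.mpr (inv_ne_zero hα)), one_smul] at hmem3
    · exact Submodule.subset_span (by simp)

theorem typeS'1_iso_iff
    (α β α' β' : ℂ)
    (h0 : α * β^2 ≠ 0)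
    (h1 : α * β^2 ≠ 1)
    (h0' : α' * β'^2 ≠ 0)
    (h1' : α' * β'^2 ≠ 1)
    : GrIso
      (X*Y - β • (Y*X))
      (X*X + Y*Z - α • (Z*Y))
      (Z*X - β • (X*Z))
      (X*Y - β' • (Y*X))
      (X*X + Y*Z - α' • (Z*Y))
      (Z*X - β' • (X*Z))
      ↔
      ((α' = α ∧ β' = β) ∨ (α' = α⁻¹ ∧ β' = β⁻¹)) := by
  have hαne : α ≠ 0 := left_ne_zero_of_mul h0
  have hβne : β ≠ 0 := fun h => (right_ne_zero_of_mul h0) (by rw [h]; ring)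
  have hα'ne : α' ≠ 0 := left_ne_zero_of_mul h0'
  have hβ'ne : β' ≠ 0 := fun h => (right_ne_zero_of_mul h0') (by rw [h]; ring)
  constructor
  · rintro ⟨E, hspan⟩
    exact forward α β α' β' hαne hβne hα'ne hβ'ne h1 h1' E hspan
  · rintro (⟨rfl, rfl⟩ | ⟨rfl, rfl⟩)
    · exact ⟨AlgEquiv.refl, by
        rw [show (AlgEquiv.refl : QA α' β' ≃ₐ[ℂ] QA α' β').toLinearMap = LinearMap.id from rfl,
          Submodule.map_id]⟩
    · obtain ⟨E, hE⟩ := backIso α β hαne hβne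
      exact ⟨E, hE⟩
end
end
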